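/- arXiv:2502.02237 — 7 statements merged into one kernel-verified Lean document; each statement's English description precedes it below -/
import Mathlib

section
/- Let ρ : ℂ → ℝ be a positive function satisfying |ρ(z) − ρ(ζ)| ≤ |z − ζ| for all z, ζ ∈ ℂ, and suppose that ∫_ℂ ρ(z)^{−γ} dm(z) < +∞ for some γ > 0, where m is Lebesgue area measure on ℂ. Then ρ(z) → +∞ as z → ∞, i.e., ρ tends to atTop along the cocompact filter of ℂ (equivalently, liminf_{z→∞} ρ(z) = +∞). -/
open MeasureTheory Filter Metric

/-- If `ρ : ℂ → ℝ` is positive, 1-Lipschitz, and `∫_ℂ ρ(z)^(-γ) dm(z) < ∞` for some `γ > 0`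
(with `m` Lebesgue area measure), then `ρ(z) → +∞` as `z → ∞`. -/
theorem rho_tendsto_atTop_of_integrable
    (ρ : ℂ → ℝ) (hρpos : ∀ z, 0 < ρ z)
    (hlip : ∀ z ζ : ℂ, |ρ z - ρ ζ| ≤ ‖z - ζ‖)
    (γ : ℝ) (hγ : 0 < γ)
    (hint : ∫⁻ z : ℂ, ENNReal.ofReal (ρ z ^ (-γ)) < ⊤) :
    Tendsto ρ (cocompact ℂ) atTop := by
  by_contra hcon
  rw [Filter.tendsto_atTop] at hcon
  push_neg at hcon
  obtain ⟨M₀, hM₀⟩ := hcon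
  set M : ℝ := max M₀ 1 with hMdef
  have hM : 0 < M := lt_of_lt_of_le one_pos (le_max_right _ _)
  have key : ∀ R : ℝ, ∃ z : ℂ, R < ‖z‖ ∧ ρ z < M := by
    intro R
    have hmem : (Metric.closedBall (0 : ℂ) R)ᶜ ∈ cocompact ℂ :=
      mem_cocompact.2 ⟨_, isCompact_closedBall 0 R, le_refl _⟩
    obtain ⟨z, hz1, hz2⟩ := Filter.frequently_iff.1 hM₀ hmem
    refine ⟨z, ?_, lt_of_lt_of_le hz2 (le_max_left _ _)⟩
    simpa [Metric.mem_closedBall, Complex.dist_eq, not_le] using hz1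
  choose g hg1 hg2 using key
  set z : ℕ → ℂ := fun n => Nat.rec (g 0) (fun _ w => g (‖w‖ + 2 * M)) n with hz
  have hρM : ∀ n, ρ (z n) < M := by
    intro n; cases n with
    | zero => exact hg2 0
    | succ k => exact hg2 _
  have hstep : ∀ n, ‖z n‖ + 2 * M < ‖z (n + 1)‖ := fun n => hg1 _
  have hgap : ∀ m n, m < n → ‖z m‖ + 2 * M < ‖z n‖ := by
    intro m n hmn
    induction n with
    | zero => omega
    | succ k ih =>
      rcases Nat.lt_succ_iff_lt_or_eq.1 hmn with h | h
      · have := ih h; have := hstep k; linarith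
      · subst h; exact hstep m
  have hdisj : Pairwise (Function.onFun Disjoint fun n => Metric.ball (z n) M) := by
    intro m n hmn
    have h2M : ∀ a b : ℕ, a < b → M + M ≤ dist (z a) (z b) := by
      intro a b hab
      have := hgap a b hab
      have hnorm : ‖z b‖ - ‖z a‖ ≤ ‖z b - z a‖ := norm_sub_norm_le _ _
      have h2 : M + M ≤ ‖z b - z a‖ := by linarith
      rw [dist_eq_norm, norm_sub_rev]
      exact h2
    rcases lt_or_gt_of_ne hmn with h | h
    · exact Metric.ball_disjoint_ball (h2M m n h)
    · exact (Metric.ball_disjoint_ball (h2M n m h)).symm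
  -- lower bound for ρ^(-γ) on each ball
  set c : ENNReal := ENNReal.ofReal ((2 * M) ^ (-γ)) with hc
  set v : ENNReal := volume (Metric.ball (0 : ℂ) M) with hv
  have hball : ∀ n, c * v ≤ ∫⁻ w in Metric.ball (z n) M, ENNReal.ofReal (ρ w ^ (-γ)) := by
    intro n
    have hpt : ∀ w ∈ Metric.ball (z n) M, c ≤ ENNReal.ofReal (ρ w ^ (-γ)) := by
      intro w hw
      have hd : ‖w - z n‖ < M := by
        simpa [Complex.dist_eq] using (Metric.mem_ball.1 hw)
      have : ρ w - ρ (z n) ≤ ‖w - z n‖ :=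
        le_trans (le_abs_self _) (hlip w (z n))
      have hle : ρ w ≤ 2 * M := by linarith [hρM n]
      exact ENNReal.ofReal_le_ofReal
        (Real.rpow_le_rpow_of_nonpos (hρpos w) hle (neg_nonpos.2 hγ.le))
    calc c * v = c * volume (Metric.ball (z n) M) := by
          rw [hv, Measure.addHaar_ball_center volume (z n) M]
      _ = ∫⁻ _ in Metric.ball (z n) M, c := (setLIntegral_const _ _).symm
      _ ≤ ∫⁻ w in Metric.ball (z n) M, ENNReal.ofReal (ρ w ^ (-γ)) :=
          setLIntegral_mono_ae (by
            have hcont : Continuous ρ := by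
              refine (LipschitzWith.continuous (K := 1) ?_)
              refine LipschitzWith.of_dist_le_mul fun a b => ?_
              simpa [Real.dist_eq, Complex.dist_eq] using hlip a b
            have hcont2 : Continuous fun w => ρ w ^ (-γ) := by
              rw [continuous_iff_continuousAt]
              intro w
              exact (Real.continuousAt_rpow_const _ _ (Or.inl (hρpos w).ne')).comp
                hcont.continuousAt
            exact ((ENNReal.continuous_ofReal.comp hcont2).measurable).aemeasurable)
            (Filter.Eventually.of_forall hpt)
  have hcv : c * v ≠ 0 := by
    apply mul_ne_zero
    · simp [hc, ENNReal.ofReal_eq_zero, not_le, Real.rpow_pos_of_pos (by linarith : (0:ℝ) < 2 * M)]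
    · exact (measure_ball_pos volume 0 hM).ne'
  have htop : (⊤ : ENNReal) ≤ ∫⁻ w : ℂ, ENNReal.ofReal (ρ w ^ (-γ)) := by
    calc (⊤ : ENNReal) = ∑' _ : ℕ, c * v := (ENNReal.tsum_const_eq_top_of_ne_zero hcv).symm
      _ ≤ ∑' n : ℕ, ∫⁻ w in Metric.ball (z n) M, ENNReal.ofReal (ρ w ^ (-γ)) :=
          ENNReal.tsum_le_tsum fun n => hball n
      _ = ∫⁻ w in ⋃ n, Metric.ball (z n) M, ENNReal.ofReal (ρ w ^ (-γ)) :=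
          (lintegral_iUnion (fun n => measurableSet_ball) hdisj _).symm
      _ ≤ ∫⁻ w : ℂ, ENNReal.ofReal (ρ w ^ (-γ)) :=
          lintegral_mono' Measure.restrict_le_self le_rfl
  exact absurd (lt_of_lt_of_le hint htop) (lt_irrefl _)
end

section
/- Let λ : ℕ → ℝ satisfy 0 ≤ λ_j for all j and S := Σ_{j=0}^∞ λ_j ≤ 1. Then | (1 − ∏'_{j} (1 − λ_j) − Σ_{l=0}^∞ λ_l ∏'_{j≠l} (1 − λ_j)) − ½ (S² − Σ_{j=0}^∞ λ_j²) | ≤ S³. -/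
/-!
Read `λⱼ` as the success probabilities of independent events. For finitely many events the
quantity in question, the remainder, is `P(N ≥ 2)` minus the pair sum `e₂ = ½(S² - Σ λⱼ²)`,
where `N` counts successes. Adding one event `a` multiplies the old remainder by `1 - λₐ` and adds
`λₐ (1 - S - ∏ (1 - λⱼ) - e₂)`, which the Bonferroni bounds `1 - S ≤ ∏ (1 - λⱼ) ≤ 1 - S + e₂`
place between `-λₐ S²` and `0`; induction gives `-S³ ≤ remainder ≤ 0`. The infinite statement is
the limit along finite sets of indices: the products with one factor removed converge pointwise
and are bounded by `1`, so the sum of the exactly-one terms converges by dominated convergence.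
-/

open Finset Filter Topology

section Finite

variable {ι : Type*} {p : ι → ℝ}

theorem one_sub_sum_le_prod_one_sub (h0 : ∀ i, 0 ≤ p i) (h1 : ∀ i, p i ≤ 1) (s : Finset ι) :
    1 - ∑ i ∈ s, p i ≤ ∏ i ∈ s, (1 - p i) := by
  induction s using Finset.cons_induction with
  | empty => simp
  | cons a s ha ih =>
    rw [prod_cons, sum_cons]
    nlinarith [h0 a, h1 a, mul_nonneg (h0 a) (sum_nonneg fun i (_ : i ∈ s) => h0 i)]

theorem prod_one_sub_le_one_sub_sum_add (h0 : ∀ i, 0 ≤ p i) (h1 : ∀ i, p i ≤ 1)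
    (s : Finset ι) :
    ∏ i ∈ s, (1 - p i) ≤ 1 - ∑ i ∈ s, p i + 1 / 2 * ((∑ i ∈ s, p i) ^ 2 - ∑ i ∈ s, p i ^ 2) := by
  induction s using Finset.cons_induction with
  | empty => simp
  | cons a s ha ih =>
    have hsq := sum_sq_le_sq_sum_of_nonneg fun i (_ : i ∈ s) => h0 i
    rw [prod_cons, sum_cons, sum_cons]
    nlinarith [mul_le_mul_of_nonneg_left ih (sub_nonneg.2 (h1 a)),
      mul_nonneg (h0 a) (sub_nonneg.2 hsq)]

variable [DecidableEq ι]

noncomputable def probExactlyOne (p : ι → ℝ) (s : Finset ι) : ℝ :=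
  ∑ i ∈ s, p i * ∏ j ∈ s.erase i, (1 - p j)

noncomputable def secondOrderRemainder (p : ι → ℝ) (s : Finset ι) : ℝ :=
  1 - ∏ i ∈ s, (1 - p i) - probExactlyOne p s - 1 / 2 * ((∑ i ∈ s, p i) ^ 2 - ∑ i ∈ s, p i ^ 2)

theorem probExactlyOne_cons (a : ι) (s : Finset ι) (ha : a ∉ s) :
    probExactlyOne p (cons a s ha) =
      p a * ∏ j ∈ s, (1 - p j) + (1 - p a) * probExactlyOne p s := by
  rw [probExactlyOne, probExactlyOne, sum_cons, erase_cons, mul_sum]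
  congr 1
  refine sum_congr rfl fun i hi => ?_
  rw [cons_eq_insert, erase_insert_of_ne (ne_of_mem_of_not_mem hi ha).symm,
    prod_insert fun h => ha (mem_of_mem_erase h)]
  ring

theorem secondOrderRemainder_cons (a : ι) (s : Finset ι) (ha : a ∉ s) :
    secondOrderRemainder p (cons a s ha) = (1 - p a) * secondOrderRemainder p s +
      p a * (1 - ∑ i ∈ s, p i - ∏ i ∈ s, (1 - p i)
        - 1 / 2 * ((∑ i ∈ s, p i) ^ 2 - ∑ i ∈ s, p i ^ 2)) := by
  rw [secondOrderRemainder, secondOrderRemainder, probExactlyOne_cons, prod_cons, sum_cons,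
    sum_cons]
  ring

theorem secondOrderRemainder_mem_Icc (h0 : ∀ i, 0 ≤ p i) (h1 : ∀ i, p i ≤ 1) (s : Finset ι) :
    secondOrderRemainder p s ∈ Set.Icc (-(∑ i ∈ s, p i) ^ 3) 0 := by
  induction s using Finset.cons_induction with
  | empty => simp [secondOrderRemainder, probExactlyOne]
  | cons a s ha ih =>
    have hPlo := one_sub_sum_le_prod_one_sub h0 h1 s
    have hPhi := prod_one_sub_le_one_sub_sum_add h0 h1 s
    have hsq0 := sum_nonneg fun i (_ : i ∈ s) => sq_nonneg (p i)
    have hsq := sum_sq_le_sq_sum_of_nonneg fun i (_ : i ∈ s) => h0 i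
    have hS : 0 ≤ ∑ i ∈ s, p i := sum_nonneg fun i _ => h0 i
    rw [secondOrderRemainder_cons, sum_cons]
    set S := ∑ i ∈ s, p i
    obtain ⟨ihlo, ihhi⟩ := ih
    have ha0 := h0 a
    have ha1 : 0 ≤ 1 - p a := sub_nonneg.2 (h1 a)
    have hstep : -(S ^ 2) ≤ 1 - S - ∏ i ∈ s, (1 - p i) - 1 / 2 * (S ^ 2 - ∑ i ∈ s, p i ^ 2) ∧
        1 - S - ∏ i ∈ s, (1 - p i) - 1 / 2 * (S ^ 2 - ∑ i ∈ s, p i ^ 2) ≤ 0 :=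
      ⟨by linarith, by linarith⟩
    constructor
    · nlinarith [mul_le_mul_of_nonneg_left ihlo ha1, mul_le_mul_of_nonneg_left hstep.1 ha0,
        mul_nonneg (mul_nonneg ha0 hS) hS, mul_nonneg (mul_nonneg ha0 ha0) hS,
        pow_nonneg ha0 3, pow_nonneg hS 3]
    · nlinarith [mul_nonpos_of_nonneg_of_nonpos ha1 ihhi,
        mul_nonpos_of_nonneg_of_nonpos ha0 hstep.2]

end Finite

section Infinite

variable {ι : Type*} {p : ι → ℝ}

theorem multipliable_one_sub (hp : Summable p) : Multipliable fun i => 1 - p i := by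
  simpa [sub_eq_add_neg] using Real.multipliable_one_add_of_summable hp.neg

variable [DecidableEq ι]

theorem tendsto_prod_erase_one_sub (hp : Summable p) (i : ι) :
    Tendsto (fun s : Finset ι => ∏ j ∈ s.erase i, (1 - p j)) atTop
      (𝓝 (∏' j : {j // j ≠ i}, (1 - p j))) := by
  have h : HasProd (Set.mulIndicator {j | j ≠ i} fun j => 1 - p j)
      (∏' j : {j // j ≠ i}, (1 - p j)) :=
    hasProd_subtype_iff_mulIndicator.mp (multipliable_one_sub (hp.subtype _)).hasProd
  refine h.congr fun s => ?_
  rw [← filter_ne', prod_filter]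
  simp only [Set.mulIndicator_apply, Set.mem_ofPred_eq]

theorem tendsto_probExactlyOne (h0 : ∀ i, 0 ≤ p i) (h1 : ∀ i, p i ≤ 1) (hp : Summable p) :
    Tendsto (probExactlyOne p) atTop (𝓝 (∑' i, p i * ∏' j : {j // j ≠ i}, (1 - p j))) := by
  have hsum (s : Finset ι) : probExactlyOne p s =
      ∑' i, Set.indicator s (fun i => p i * ∏ j ∈ s.erase i, (1 - p j)) i :=
    sum_eq_tsum_indicator _ _
  have hfac (j : ι) : 0 ≤ 1 - p j ∧ 1 - p j ≤ 1 := ⟨sub_nonneg.2 (h1 j), sub_le_self 1 (h0 j)⟩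
  simp_rw [funext hsum]
  refine tendsto_tsum_of_dominated_convergence hp (fun i => ?_) (.of_forall fun s i => ?_)
  · refine ((tendsto_prod_erase_one_sub hp i).const_mul (p i)).congr' ?_
    filter_upwards [eventually_ge_atTop {i}] with s hs
    rw [Set.indicator_of_mem (by simpa using hs)]
  · refine (norm_indicator_le_norm_self _ _).trans ?_
    rw [norm_mul, Real.norm_of_nonneg (h0 i),
      Real.norm_of_nonneg (prod_nonneg fun j _ => (hfac j).1)]
    exact mul_le_of_le_one_right (h0 i) (prod_le_one (fun j _ => (hfac j).1) fun j _ => (hfac j).2)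

end Infinite

/-- Quantitative second-order expansion: if `λⱼ ≥ 0` and `S = Σ λⱼ ≤ 1`, then
`1 − ∏'ⱼ (1 − λⱼ) − Σ_l λ_l ∏'_{j≠l} (1 − λⱼ)` equals `½(S² − Σ λⱼ²)` up to an error
of at most `S³`. -/
theorem two_or_more_second_order (l : ℕ → ℝ) (hpos : ∀ j, 0 ≤ l j)
    (hsum : Summable l) (hS : ∑' j, l j ≤ 1) :
    |(1 - (∏' j, (1 - l j)) - ∑' i : ℕ, l i * ∏' j : {j : ℕ // j ≠ i}, (1 - l (j : ℕ)))
        - (1 / 2) * ((∑' j, l j) ^ 2 - ∑' j, (l j) ^ 2)|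
      ≤ (∑' j, l j) ^ 3 := by
  have h1 (j : ℕ) : l j ≤ 1 := (hsum.le_tsum j fun i _ => hpos i).trans hS
  have hsum2 : Summable fun j => l j ^ 2 :=
    hsum.of_nonneg_of_le (fun j => sq_nonneg _) fun j =>
      pow_le_of_le_one (hpos j) (h1 j) two_ne_zero
  have hlim : Tendsto (secondOrderRemainder l) atTop
      (𝓝 ((1 - (∏' j, (1 - l j)) - ∑' i : ℕ, l i * ∏' j : {j : ℕ // j ≠ i}, (1 - l (j : ℕ)))
        - (1 / 2) * ((∑' j, l j) ^ 2 - ∑' j, (l j) ^ 2))) :=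
    ((tendsto_const_nhds.sub (multipliable_one_sub hsum).hasProd).sub
      (tendsto_probExactlyOne hpos h1 hsum)).sub
      (tendsto_const_nhds.mul ((hsum.hasSum.pow 2).sub hsum2.hasSum))
  have hbounds := fun s => secondOrderRemainder_mem_Icc hpos h1 s
  have hcube : 0 ≤ (∑' j, l j) ^ 3 := pow_nonneg (tsum_nonneg hpos) 3
  rw [abs_le]
  exact ⟨le_of_tendsto_of_tendsto' (hsum.hasSum.pow 3).neg hlim fun s => (hbounds s).1,
    (le_of_tendsto' hlim fun s => (hbounds s).2).trans hcube⟩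
end

section
/- Let (Ω, ℱ, ℙ) be a probability space and let (ξ_j)_{j∈ℕ} be mutually independent random variables taking values in {0,1} with ℙ(ξ_j = 1) = λ_j, where λ_j ∈ [0,1], and set S := Σ_{j} λ_j. Assume S ≤ 1 and let X = Σ_{j} ξ_j. Then | ℙ(X ≥ 2) − ½ (S² − Σ_{j} λ_j²) | ≤ S³. -/
open MeasureTheory ProbabilityTheory

open scoped ENNReal


lemma aux_pair_tsum (l : ℕ → ℝ) (hnn : ∀ j, 0 ≤ l j) (hsum : Summable l) :
    ∑' p : {p : ℕ × ℕ // p.1 < p.2}, l p.1.1 * l p.1.2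
      = (1 / 2) * ((∑' j, l j) ^ 2 - ∑' j, (l j) ^ 2) := by
  classical
  set f : ℕ × ℕ → ℝ := fun p => l p.1 * l p.2 with hf_def
  have hf : Summable f := hsum.mul_of_nonneg hsum (fun j => hnn j) (fun j => hnn j)
  have habs : Summable fun x => ‖l x‖ := by
    simpa [Real.norm_eq_abs, abs_of_nonneg (hnn _)] using hsum
  have hsq : (∑' j, l j) ^ 2 = ∑' p : ℕ × ℕ, f p := by
    rw [sq]
    exact tsum_mul_tsum_of_summable_norm habs habs
  set u : Set (ℕ × ℕ) := {p | p.1 < p.2} with hu_def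
  set d : Set (ℕ × ℕ) := {p | p.1 = p.2} with hd_def
  set w : Set (ℕ × ℕ) := {p | p.2 < p.1} with hw_def
  have hud : Disjoint u d := by
    rw [Set.disjoint_left]; intro p hp hp2
    simp only [hu_def, hd_def, Set.mem_setOf_eq] at hp hp2
    omega
  have hudw : Disjoint (u ∪ d) w := by
    rw [Set.disjoint_left]; intro p hp hp2
    simp only [hu_def, hd_def, hw_def, Set.mem_union, Set.mem_setOf_eq] at hp hp2
    omega
  have huniv : (u ∪ d) ∪ w = Set.univ := by
    ext p
    simp only [Set.mem_union, Set.mem_setOf_eq, Set.mem_univ, iff_true, hu_def, hd_def, hw_def]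
    rcases lt_trichotomy p.1 p.2 with h | h | h
    · exact Or.inl (Or.inl h)
    · exact Or.inl (Or.inr h)
    · exact Or.inr h
  have hsplit : ∑' p : ℕ × ℕ, f p
      = (∑' p : u, f p + ∑' p : d, f p) + ∑' p : w, f p := by
    rw [← tsum_univ f, ← huniv,
      Summable.tsum_union_disjoint hudw (hf.subtype _) (hf.subtype _),
      Summable.tsum_union_disjoint hud (hf.subtype _) (hf.subtype _)]
  have hwu : ∑' p : w, f p = ∑' p : u, f p := by
    rw [← Equiv.tsum_eq
      ({ toFun := fun p => ⟨(p.1.2, p.1.1), p.2⟩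
         invFun := fun p => ⟨(p.1.2, p.1.1), p.2⟩
         left_inv := fun p => by ext <;> rfl
         right_inv := fun p => by ext <;> rfl } : u ≃ w) (fun x : w => f x)]
    refine tsum_congr fun p => ?_
    simp only [Equiv.coe_fn_mk, hf_def]
    exact mul_comm _ _
  have hdiag : ∑' p : d, f p = ∑' j, (l j) ^ 2 := by
    rw [← Equiv.tsum_eq
      ({ toFun := fun n => ⟨(n, n), rfl⟩
         invFun := fun p => p.1.1
         left_inv := fun n => rfl
         right_inv := fun p => by
           ext
           · rfl
           · exact p.2 } : ℕ ≃ d) (fun x : d => f x)]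
    refine tsum_congr fun n => ?_
    simp only [Equiv.coe_fn_mk, hf_def]
    exact (sq (l n)).symm
  have hu_eq : (∑' p : u, f p) = ∑' p : {p : ℕ × ℕ // p.1 < p.2}, l p.1.1 * l p.1.2 := rfl
  rw [← hu_eq]
  rw [hsq, hsplit, hwu, hdiag]
  ring



open Classical in
noncomputable def bern_ind (s : Set ℕ) (i : ℕ) : ℝ≥0∞ := if i ∈ s then 1 else 0

lemma bern_ind_mem {s : Set ℕ} {i : ℕ} (h : i ∈ s) : bern_ind s i = 1 := by
  simp [bern_ind, h]

lemma bern_ind_eq_zero {s : Set ℕ} {i : ℕ} (h : i ∉ s) : bern_ind s i = 0 := by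
  simp [bern_ind, h]

lemma aux_ptwise (s : Set ℕ) (c : ℝ≥0∞)
    (hc : ∀ i j : ℕ, i < j → i ∈ s → j ∈ s → c = 1) :
    2 * ∑' p : {p : ℕ × ℕ // p.1 < p.2}, bern_ind s p.1.1 * bern_ind s p.1.2
      ≤ (∑' t : {t : ℕ × ℕ × ℕ // t.1 ≠ t.2.1 ∧ t.1 ≠ t.2.2 ∧ t.2.1 ≠ t.2.2},
            bern_ind s t.1.1 * bern_ind s t.1.2.1 * bern_ind s t.1.2.2) + 2 * c := by
  classical
  set tN : {p : ℕ × ℕ // p.1 < p.2} → ℝ≥0∞ :=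
    fun p => bern_ind s p.1.1 * bern_ind s p.1.2 with htN
  set tM : {t : ℕ × ℕ × ℕ // t.1 ≠ t.2.1 ∧ t.1 ≠ t.2.2 ∧ t.2.1 ≠ t.2.2} → ℝ≥0∞ :=
    fun t => bern_ind s t.1.1 * bern_ind s t.1.2.1 * bern_ind s t.1.2.2 with htM
  by_cases hpair : ∃ i j : ℕ, i < j ∧ i ∈ s ∧ j ∈ s
  · obtain ⟨i, j, hij, hi, hj⟩ := hpair
    have hc1 : c = 1 := hc i j hij hi hj
    by_cases htrip : ∃ k, k ∈ s ∧ k ≠ i ∧ k ≠ j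
    · -- at least three elements of s : injection argument shows 2N ≤ M
      obtain ⟨k, hk, hki, hkj⟩ := htrip
      set zf : ℕ → ℕ → ℕ := fun x y =>
        if x = i ∨ y = i then (if x = j ∨ y = j then k else j) else i with hzf
      have hz_mem : ∀ x y, zf x y ∈ s := by
        intro x y
        simp only [hzf]
        split
        · split
          · exact hk
          · exact hj
        · exact hi
      have hz_ne : ∀ x y : ℕ, x ≠ y → zf x y ≠ x ∧ zf x y ≠ y := by
        intro x y hxy
        have hij' : i ≠ j := Nat.ne_of_lt hij
        simp only [hzf]
        split
        · split
          · omega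
          · omega
        · omega
      have hzx : ∀ (p : {p : ℕ × ℕ // p.1 < p.2}),
          zf p.1.1 p.1.2 ≠ p.1.1 ∧ zf p.1.1 p.1.2 ≠ p.1.2 :=
        fun p => hz_ne _ _ (Nat.ne_of_lt p.2)
      set Φ : {p : ℕ × ℕ // p.1 < p.2} × Bool →
          {t : ℕ × ℕ × ℕ // t.1 ≠ t.2.1 ∧ t.1 ≠ t.2.2 ∧ t.2.1 ≠ t.2.2} := fun q =>
        if q.2 then
          ⟨(q.1.1.1, q.1.1.2, zf q.1.1.1 q.1.1.2),
            Nat.ne_of_lt q.1.2, Ne.symm (hzx q.1).1, Ne.symm (hzx q.1).2⟩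
        else
          ⟨(q.1.1.2, q.1.1.1, zf q.1.1.1 q.1.1.2),
            Ne.symm (Nat.ne_of_lt q.1.2), Ne.symm (hzx q.1).2, Ne.symm (hzx q.1).1⟩
        with hΦ
      have hΦinj : Function.Injective Φ := by
        rintro ⟨⟨⟨x, y⟩, hq⟩, t⟩ ⟨⟨⟨x', y'⟩, hq'⟩, t'⟩ he
        simp only [hΦ] at he
        cases t <;> cases t' <;>
          simp only [if_true, if_false, Bool.false_eq_true, Subtype.mk.injEq,
            Prod.mk.injEq] at he
        · obtain ⟨h1, h2, -⟩ := he
          simp only [Prod.mk.injEq, Subtype.mk.injEq]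
          exact ⟨⟨h2, h1⟩, trivial⟩
        · exfalso
          simp only [Prod.mk.injEq] at hq hq'
          omega
        · exfalso
          simp only [Prod.mk.injEq] at hq hq'
          omega
        · obtain ⟨h1, h2, -⟩ := he
          simp only [Prod.mk.injEq, Subtype.mk.injEq]
          exact ⟨⟨h1, h2⟩, trivial⟩
      have hle : ∀ q, tN q.1 ≤ tM (Φ q) := by
        intro q
        have hzs : bern_ind s (zf q.1.1.1 q.1.1.2) = 1 := bern_ind_mem (hz_mem _ _)
        simp only [hΦ, htN, htM]
        split
        · simp only [hzs, mul_one]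
          exact le_rfl
        · simp only [hzs, mul_one]
          exact le_of_eq (mul_comm _ _)
      have hdouble : ∑' q : {p : ℕ × ℕ // p.1 < p.2} × Bool, tN q.1
          = 2 * ∑' p, tN p := by
        rw [ENNReal.tsum_prod', ← ENNReal.tsum_mul_left]
        exact tsum_congr fun a => by rw [tsum_bool, two_mul]
      calc 2 * ∑' p, tN p = ∑' q : {p : ℕ × ℕ // p.1 < p.2} × Bool, tN q.1 :=
            hdouble.symm
        _ ≤ ∑' q, tM (Φ q) := ENNReal.tsum_le_tsum hle
        _ ≤ ∑' t, tM t := ENNReal.tsum_comp_le_tsum_of_injective hΦinj tM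
        _ ≤ _ := le_self_add
    · -- s = {i, j} : N = 1
      push_neg at htrip
      have hsub : ∀ m ∈ s, m = i ∨ m = j := by
        intro m hm
        by_cases hmi : m = i
        · exact Or.inl hmi
        · exact Or.inr (htrip m hm hmi)
      have hN1 : ∑' p, tN p = 1 := by
        have h0 : ∀ q, q ≠ (⟨(i, j), hij⟩ : {p : ℕ × ℕ // p.1 < p.2}) → tN q = 0 := by
          intro q hq
          by_cases h1 : q.1.1 ∈ s
          · by_cases h2 : q.1.2 ∈ s
            · exfalso
              have hlt := q.2
              rcases hsub _ h1 with e1 | e1 <;> rcases hsub _ h2 with e2 | e2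
              · omega
              · exact hq (Subtype.ext (Prod.ext e1 e2))
              · omega
              · omega
            · simp [htN, bern_ind_eq_zero h2]
          · simp [htN, bern_ind_eq_zero h1]
        rw [tsum_eq_single (⟨(i, j), hij⟩ : {p : ℕ × ℕ // p.1 < p.2}) h0]
        simp [htN, bern_ind_mem hi, bern_ind_mem hj]
      rw [hN1, hc1]
      exact le_add_self
  · -- no pair in s : N = 0
    push_neg at hpair
    have hN0 : ∑' p, tN p = 0 := by
      rw [ENNReal.tsum_eq_zero]
      intro p
      by_cases h1 : p.1.1 ∈ s
      · by_cases h2 : p.1.2 ∈ s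
        · exact absurd h2 (hpair _ _ p.2 h1)
        · simp [htN, bern_ind_eq_zero h2]
      · simp [htN, bern_ind_eq_zero h1]
    rw [hN0]
    simp

/-- Lemma 3.3 in probabilistic form: if `X = Σⱼ ξⱼ` is a sum of independent Bernoulli(λⱼ)
random variables with `S = Σ λⱼ ≤ 1`, then `|ℙ(X ≥ 2) − ½(S² − Σ λⱼ²)| ≤ S³`. -/
theorem prob_sum_bernoulli_ge_two
    {Ω : Type*} [MeasurableSpace Ω] (μ : Measure Ω) [IsProbabilityMeasure μ]
    (ξ : ℕ → Ω → ℝ) (hmeas : ∀ j, Measurable (ξ j))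
    (hval : ∀ j ω, ξ j ω = 0 ∨ ξ j ω = 1)
    (hindep : iIndepFun ξ μ)
    (l : ℕ → ℝ) (h01 : ∀ j, 0 ≤ l j ∧ l j ≤ 1)
    (hl : ∀ j, μ {ω | ξ j ω = 1} = ENNReal.ofReal (l j))
    (hsum : Summable l) (hS : ∑' j, l j ≤ 1) :
    |(μ {ω | 2 ≤ ∑' j, ξ j ω}).toReal
        - (1 / 2) * ((∑' j, l j) ^ 2 - ∑' j, (l j) ^ 2)|
      ≤ (∑' j, l j) ^ 3 := by
  classical
  have hnn : ∀ j, 0 ≤ l j := fun j => (h01 j).1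
  set S : ℝ := ∑' j, l j with hS_def
  have hS0 : 0 ≤ S := tsum_nonneg hnn
  set L : ℕ → ℝ≥0∞ := fun j => ENNReal.ofReal (l j) with hL_def
  have hLsum : ∑' j, L j = ENNReal.ofReal S :=
    (ENNReal.ofReal_tsum_of_nonneg hnn hsum).symm
  -- the events
  have hA : ∀ j, MeasurableSet {ω | ξ j ω = 1} :=
    fun j => (hmeas j) (measurableSet_singleton 1)
  -- pairwise and triplewise independence computations
  have hpairμ : ∀ i j : ℕ, i ≠ j →
      μ ({ω | ξ i ω = 1} ∩ {ω | ξ j ω = 1}) = L i * L j := by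
    intro i j hij
    have h := hindep.measure_inter_preimage_eq_mul {i, j} (sets := fun _ => ({1} : Set ℝ))
      (fun _ _ => measurableSet_singleton 1)
    have hij' : i ∉ ({j} : Finset ℕ) := by simp [hij]
    rw [Finset.set_biInter_insert, Finset.set_biInter_singleton, Finset.prod_insert hij',
      Finset.prod_singleton] at h
    have h' : μ ({ω | ξ i ω = 1} ∩ {ω | ξ j ω = 1})
        = μ {ω | ξ i ω = 1} * μ {ω | ξ j ω = 1} := h
    rw [h', hl i, hl j]
  have htripμ : ∀ i j k : ℕ, i ≠ j → i ≠ k → j ≠ k →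
      μ ({ω | ξ i ω = 1} ∩ ({ω | ξ j ω = 1} ∩ {ω | ξ k ω = 1}))
        = L i * L j * L k := by
    intro i j k hij hik hjk
    have h := hindep.measure_inter_preimage_eq_mul {i, j, k} (sets := fun _ => ({1} : Set ℝ))
      (fun _ _ => measurableSet_singleton 1)
    have h1 : i ∉ ({j, k} : Finset ℕ) := by simp [hij, hik]
    have h2 : j ∉ ({k} : Finset ℕ) := by simp [hjk]
    rw [Finset.set_biInter_insert, Finset.set_biInter_insert, Finset.set_biInter_singleton,
      Finset.prod_insert h1, Finset.prod_insert h2, Finset.prod_singleton] at h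
    have h' : μ ({ω | ξ i ω = 1} ∩ ({ω | ξ j ω = 1} ∩ {ω | ξ k ω = 1}))
        = μ {ω | ξ i ω = 1} * (μ {ω | ξ j ω = 1} * μ {ω | ξ k ω = 1}) := h
    rw [h', hl i, hl j, hl k, mul_assoc]
  -- main objects
  set A2 : Set Ω :=
    ⋃ p : {p : ℕ × ℕ // p.1 < p.2}, ({ω | ξ p.1.1 ω = 1} ∩ {ω | ξ p.1.2 ω = 1}) with hA2_def
  have hA2meas : MeasurableSet A2 :=
    MeasurableSet.iUnion fun p => (hA _).inter (hA _)
  set T : ℝ≥0∞ := ∑' p : {p : ℕ × ℕ // p.1 < p.2}, L p.1.1 * L p.1.2 with hT_def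
  set S3 : ℝ≥0∞ :=
    ∑' t : {t : ℕ × ℕ × ℕ // t.1 ≠ t.2.1 ∧ t.1 ≠ t.2.2 ∧ t.2.1 ≠ t.2.2},
      L t.1.1 * L t.1.2.1 * L t.1.2.2 with hS3_def
  -- Step 1 : the event {2 ≤ X} coincides with A2 up to a null set
  have hEA2 : μ {ω | 2 ≤ ∑' j, ξ j ω} = μ A2 := by
    set Bad : Set Ω := Filter.limsup (fun j => {ω | ξ j ω = 1}) Filter.atTop with hBad_def
    have hBad0 : μ Bad = 0 := by
      apply measure_limsup_atTop_eq_zero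
      rw [show (fun i => μ {ω | ξ i ω = 1}) = L by funext i; exact hl i, hLsum]
      exact ENNReal.ofReal_ne_top
    have hfin : ∀ ω, ω ∉ Bad → {j | ξ j ω = 1}.Finite := by
      intro ω hω
      by_contra hinf
      exact hω (Filter.mem_limsup_iff_frequently_mem.mpr
        (Nat.frequently_atTop_iff_infinite.mpr hinf))
    have hiff : ∀ ω, {j | ξ j ω = 1}.Finite →
        (2 ≤ ∑' j, ξ j ω ↔ ω ∈ A2) := by
      intro ω hfw
      have hz : ∀ b ∉ hfw.toFinset, ξ b ω = 0 := by
        intro b hb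
        rcases hval b ω with h | h
        · exact h
        · exact absurd (hfw.mem_toFinset.mpr h) hb
      have hts : ∑' j, ξ j ω = (hfw.toFinset.card : ℝ) := by
        rw [tsum_eq_sum hz]
        rw [Finset.sum_congr rfl (fun b hb => hfw.mem_toFinset.mp hb)]
        simp
      constructor
      · intro h2
        rw [hts] at h2
        have hcard : 1 < hfw.toFinset.card := by
          by_contra hle
          push_neg at hle
          have : (hfw.toFinset.card : ℝ) ≤ 1 := by exact_mod_cast hle
          linarith
        obtain ⟨a, ha, b, hb, hab⟩ := Finset.one_lt_card.mp hcard
        have ha' : ξ a ω = 1 := hfw.mem_toFinset.mp ha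
        have hb' : ξ b ω = 1 := hfw.mem_toFinset.mp hb
        rcases hab.lt_or_gt with h | h
        · exact Set.mem_iUnion.mpr ⟨⟨(a, b), h⟩, ha', hb'⟩
        · exact Set.mem_iUnion.mpr ⟨⟨(b, a), h⟩, hb', ha'⟩
      · intro h2
        obtain ⟨p, hp1, hp2⟩ := Set.mem_iUnion.mp h2
        have h1 : p.1.1 ∈ hfw.toFinset := hfw.mem_toFinset.mpr hp1
        have h2' : p.1.2 ∈ hfw.toFinset := hfw.mem_toFinset.mpr hp2
        have hcard : 1 < hfw.toFinset.card :=
          Finset.one_lt_card.mpr ⟨_, h1, _, h2', Nat.ne_of_lt p.2⟩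
        rw [hts]
        have : 2 ≤ hfw.toFinset.card := hcard
        exact_mod_cast this
    apply le_antisymm
    · calc μ {ω | 2 ≤ ∑' j, ξ j ω} ≤ μ (A2 ∪ Bad) := by
            apply measure_mono
            intro ω hω
            by_cases hb : ω ∈ Bad
            · exact Or.inr hb
            · exact Or.inl ((hiff ω (hfin ω hb)).mp hω)
        _ ≤ μ A2 + μ Bad := measure_union_le _ _
        _ = μ A2 := by rw [hBad0, add_zero]
    · calc μ A2 ≤ μ ({ω | 2 ≤ ∑' j, ξ j ω} ∪ Bad) := by
            apply measure_mono
            intro ω hω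
            by_cases hb : ω ∈ Bad
            · exact Or.inr hb
            · exact Or.inl ((hiff ω (hfin ω hb)).mpr hω)
        _ ≤ μ {ω | 2 ≤ ∑' j, ξ j ω} + μ Bad := measure_union_le _ _
        _ = μ {ω | 2 ≤ ∑' j, ξ j ω} := by rw [hBad0, add_zero]
  -- Step 2 : upper bound
  have hupper : μ A2 ≤ T := by
    rw [hA2_def, hT_def]
    refine le_trans (measure_iUnion_le _) ?_
    exact le_of_eq (tsum_congr fun p => hpairμ _ _ (Nat.ne_of_lt p.2))
  -- Step 3 : lower bound via second/third moment
  have hlower : 2 * T ≤ S3 + 2 * μ A2 := by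
    set N : Ω → ℝ≥0∞ := fun ω => ∑' p : {p : ℕ × ℕ // p.1 < p.2},
      ({ω' | ξ p.1.1 ω' = 1} ∩ {ω' | ξ p.1.2 ω' = 1}).indicator 1 ω with hN_def
    set M : Ω → ℝ≥0∞ := fun ω =>
      ∑' t : {t : ℕ × ℕ × ℕ // t.1 ≠ t.2.1 ∧ t.1 ≠ t.2.2 ∧ t.2.1 ≠ t.2.2},
        ({ω' | ξ t.1.1 ω' = 1} ∩ ({ω' | ξ t.1.2.1 ω' = 1} ∩ {ω' | ξ t.1.2.2 ω' = 1})).indicator 1 ω with hM_def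
    have hNmeas : Measurable N :=
      Measurable.ennreal_tsum fun p => measurable_const.indicator ((hA _).inter (hA _))
    have hMmeas : Measurable M :=
      Measurable.ennreal_tsum fun t =>
        measurable_const.indicator ((hA _).inter ((hA _).inter (hA _)))
    have hNint : ∫⁻ ω, N ω ∂μ = T := by
      simp only [hN_def]
      rw [lintegral_tsum (f := fun (p : {p : ℕ × ℕ // p.1 < p.2}) (ω : Ω) =>
          ({ω' | ξ p.1.1 ω' = 1} ∩ {ω' | ξ p.1.2 ω' = 1}).indicator 1 ω)
        fun p => (measurable_one.indicator ((hA _).inter (hA _))).aemeasurable]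
      refine tsum_congr fun p => ?_
      rw [lintegral_indicator_one ((hA _).inter (hA _))]
      exact hpairμ _ _ (Nat.ne_of_lt p.2)
    have hMint : ∫⁻ ω, M ω ∂μ = S3 := by
      simp only [hM_def]
      rw [lintegral_tsum (f := fun (t : {t : ℕ × ℕ × ℕ //
            t.1 ≠ t.2.1 ∧ t.1 ≠ t.2.2 ∧ t.2.1 ≠ t.2.2}) (ω : Ω) =>
          ({ω' | ξ t.1.1 ω' = 1} ∩ ({ω' | ξ t.1.2.1 ω' = 1} ∩ {ω' | ξ t.1.2.2 ω' = 1})).indicator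
            1 ω)
        fun t => (measurable_one.indicator ((hA _).inter ((hA _).inter (hA _)))).aemeasurable]
      refine tsum_congr fun t => ?_
      rw [lintegral_indicator_one ((hA _).inter ((hA _).inter (hA _)))]
      exact htripμ _ _ _ t.2.1 t.2.2.1 t.2.2.2
    have hptw : ∀ ω, 2 * N ω ≤ M ω + 2 * A2.indicator 1 ω := by
      intro ω
      have key := aux_ptwise {j | ξ j ω = 1} (A2.indicator 1 ω)
        (by
          intro i j hij hi hj
          have : ω ∈ A2 := Set.mem_iUnion.mpr ⟨⟨(i, j), hij⟩, hi, hj⟩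
          simp [Set.indicator_of_mem this])
      have hNω : N ω = ∑' p : {p : ℕ × ℕ // p.1 < p.2},
          bern_ind {j | ξ j ω = 1} p.1.1 * bern_ind {j | ξ j ω = 1} p.1.2 := by
        rw [hN_def]
        refine tsum_congr fun p => ?_
        by_cases h1 : ξ p.1.1 ω = 1 <;> by_cases h2 : ξ p.1.2 ω = 1 <;>
          simp [Set.indicator, bern_ind, h1, h2, Set.mem_inter_iff, Set.mem_setOf_eq]
      have hMω : M ω =
          ∑' t : {t : ℕ × ℕ × ℕ // t.1 ≠ t.2.1 ∧ t.1 ≠ t.2.2 ∧ t.2.1 ≠ t.2.2},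
            bern_ind {j | ξ j ω = 1} t.1.1 * bern_ind {j | ξ j ω = 1} t.1.2.1 *
              bern_ind {j | ξ j ω = 1} t.1.2.2 := by
        rw [hM_def]
        refine tsum_congr fun t => ?_
        by_cases h1 : ξ t.1.1 ω = 1 <;> by_cases h2 : ξ t.1.2.1 ω = 1 <;>
          by_cases h3 : ξ t.1.2.2 ω = 1 <;>
          simp [Set.indicator, bern_ind, h1, h2, h3, Set.mem_inter_iff, Set.mem_setOf_eq,
            mul_assoc]
      rw [hNω, hMω]
      exact key
    calc 2 * T = ∫⁻ ω, 2 * N ω ∂μ := by rw [lintegral_const_mul 2 hNmeas, hNint]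
      _ ≤ ∫⁻ ω, (M ω + 2 * A2.indicator 1 ω) ∂μ := lintegral_mono hptw
      _ = S3 + 2 * μ A2 := by
          rw [lintegral_add_left hMmeas, hMint,
            lintegral_const_mul (f := A2.indicator 1) 2 (measurable_one.indicator hA2meas),
            lintegral_indicator_one hA2meas]
  -- identification of T with the real quantity
  have hsubsum : Summable (fun p : {p : ℕ × ℕ // p.1 < p.2} => l p.1.1 * l p.1.2) := by
    have := (hsum.mul_of_nonneg hsum (fun j => hnn j) (fun j => hnn j)).subtype
      {p : ℕ × ℕ | p.1 < p.2}
    exact this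
  have hTreal : T = ENNReal.ofReal (∑' p : {p : ℕ × ℕ // p.1 < p.2}, l p.1.1 * l p.1.2) := by
    rw [hT_def, ENNReal.ofReal_tsum_of_nonneg (fun p => mul_nonneg (hnn _) (hnn _)) hsubsum]
    exact tsum_congr fun p => (ENNReal.ofReal_mul (hnn _)).symm
  have hPrs : (∑' p : {p : ℕ × ℕ // p.1 < p.2}, l p.1.1 * l p.1.2)
      = (1 / 2) * (S ^ 2 - ∑' j, (l j) ^ 2) := aux_pair_tsum l hnn hsum
  -- bound on S3
  have hS3le : S3 ≤ ENNReal.ofReal (S ^ 3) := by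
    have step1 : S3 ≤ ∑' t : ℕ × ℕ × ℕ, L t.1 * L t.2.1 * L t.2.2 := by
      rw [hS3_def]
      exact ENNReal.tsum_comp_le_tsum_of_injective Subtype.val_injective
        (fun t : ℕ × ℕ × ℕ => L t.1 * L t.2.1 * L t.2.2)
    have step2 : ∑' t : ℕ × ℕ × ℕ, L t.1 * L t.2.1 * L t.2.2
        = (∑' j, L j) ^ 3 := by
      rw [ENNReal.tsum_prod']
      calc ∑' a, ∑' y : ℕ × ℕ, L a * L y.1 * L y.2
          = ∑' a, ∑' b, ∑' c, L a * L b * L c := tsum_congr fun a => ENNReal.tsum_prod'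
        _ = ∑' a, ∑' b, (L a * L b) * ∑' c, L c :=
            tsum_congr fun a => tsum_congr fun b => ENNReal.tsum_mul_left
        _ = ∑' a, (L a * ∑' b, L b) * ∑' c, L c := by
            refine tsum_congr fun a => ?_
            rw [ENNReal.tsum_mul_right, ENNReal.tsum_mul_left]
        _ = (∑' a, L a) * (∑' b, L b) * (∑' c, L c) := by
            rw [ENNReal.tsum_mul_right, ENNReal.tsum_mul_right]
        _ = (∑' j, L j) ^ 3 := by ring
    rw [step2, hLsum, ← ENNReal.ofReal_pow hS0] at step1
    exact step1
  -- final real arithmetic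
  have hμfin : μ A2 ≠ ⊤ := measure_ne_top μ A2
  have hTfin : T ≠ ⊤ := by rw [hTreal]; exact ENNReal.ofReal_ne_top
  have hPrs0 : 0 ≤ ∑' p : {p : ℕ × ℕ // p.1 < p.2}, l p.1.1 * l p.1.2 :=
    tsum_nonneg fun p => mul_nonneg (hnn _) (hnn _)
  have hTtoReal : T.toReal = (1 / 2) * (S ^ 2 - ∑' j, (l j) ^ 2) := by
    rw [hTreal, ENNReal.toReal_ofReal hPrs0, hPrs]
  have h1R : (μ A2).toReal ≤ T.toReal := ENNReal.toReal_mono hTfin hupper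
  have h2R : 2 * T.toReal ≤ S ^ 3 + 2 * (μ A2).toReal := by
    have h2' : 2 * T ≤ ENNReal.ofReal (S ^ 3) + 2 * μ A2 :=
      le_trans hlower (add_le_add_left hS3le _)
    have hrhs_fin : ENNReal.ofReal (S ^ 3) + 2 * μ A2 ≠ ⊤ := by
      refine ENNReal.add_ne_top.mpr ⟨ENNReal.ofReal_ne_top, ?_⟩
      exact ENNReal.mul_ne_top (by simp) hμfin
    have := ENNReal.toReal_mono hrhs_fin h2'
    rw [ENNReal.toReal_mul, ENNReal.toReal_add ENNReal.ofReal_ne_top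
      (ENNReal.mul_ne_top (by simp) hμfin), ENNReal.toReal_mul,
      ENNReal.toReal_ofReal (pow_nonneg hS0 3)] at this
    simpa using this
  have hS3nn : 0 ≤ S ^ 3 := pow_nonneg hS0 3
  rw [hEA2, ← hTtoReal]
  rw [abs_le]
  constructor
  · linarith
  · linarith
end

section
/- Let (Ω, ℱ, ℙ) be a probability space and let (X_n)_{n∈ℕ} be mutually independent random variables with values in ℕ, where X_n has the Poisson distribution with parameter p_n and 0 < p_n ≤ 1 for every n. Then ℙ(X_n ≥ 2 for infinitely many n) = 0 if Σ_n p_n² < ∞, and ℙ(X_n ≥ 2 for infinitely many n) = 1 if Σ_n p_n² = ∞. -/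
open MeasureTheory ProbabilityTheory Filter

/-- Borel–Cantelli dichotomy for independent Poisson variables `Xₙ` with parameters
`0 < pₙ ≤ 1`: the event `{Xₙ ≥ 2 infinitely often}` has probability `0` if `Σ pₙ² < ∞`
and probability `1` if `Σ pₙ² = ∞`. -/
theorem poisson_ge_two_infinitely_often
    {Ω : Type*} [MeasurableSpace Ω] (μ : Measure Ω) [IsProbabilityMeasure μ]
    (X : ℕ → Ω → ℕ) (hmeas : ∀ n, Measurable (X n))
    (hindep : iIndepFun X μ)
    (p : ℕ → ℝ) (hp : ∀ n, 0 < p n) (hp1 : ∀ n, p n ≤ 1)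
    (hpois : ∀ n, ∀ k : ℕ, μ {ω | X n ω = k}
      = ENNReal.ofReal (Real.exp (-p n) * p n ^ k / (Nat.factorial k))) :
    (Summable (fun n => p n ^ 2) →
        μ (limsup (fun n => {ω | 2 ≤ X n ω}) atTop) = 0)
      ∧ (¬ Summable (fun n => p n ^ 2) →
        μ (limsup (fun n => {ω | 2 ≤ X n ω}) atTop) = 1) := by
  set s : ℕ → Set Ω := fun n => {ω | 2 ≤ X n ω} with hs
  have hsm : ∀ n, MeasurableSet (s n) := fun n =>
    measurableSet_le measurable_const (hmeas n)
  -- complement measure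
  have hcompl : ∀ n, μ (s n)ᶜ
      = ENNReal.ofReal (Real.exp (-p n) * (1 + p n)) := by
    intro n
    have hset : (s n)ᶜ = {ω | X n ω = 0} ∪ {ω | X n ω = 1} := by
      ext ω; simp [hs, Set.mem_setOf_eq]; omega
    have hdisj : Disjoint {ω | X n ω = 0} {ω | X n ω = 1} := by
      rw [Set.disjoint_left]; intro ω h0 h1
      simp [Set.mem_setOf_eq] at h0 h1; omega
    have hm1 : MeasurableSet {ω | X n ω = 1} := hmeas n (measurableSet_singleton 1)
    rw [hset, measure_union hdisj hm1, hpois n 0, hpois n 1]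
    rw [← ENNReal.ofReal_add (div_nonneg (mul_nonneg (Real.exp_nonneg _) (pow_nonneg (hp n).le _)) (Nat.cast_nonneg _))
      (div_nonneg (mul_nonneg (Real.exp_nonneg _) (pow_nonneg (hp n).le _)) (Nat.cast_nonneg _))]
    congr 1
    simp [Nat.factorial]
    ring
  have hμs : ∀ n, μ (s n) = 1 - ENNReal.ofReal (Real.exp (-p n) * (1 + p n)) := by
    intro n
    have h := prob_compl_eq_one_sub (μ := μ) ((hsm n).compl)
    rw [compl_compl] at h
    rw [h, hcompl n]
  -- upper bound
  have hub : ∀ n, μ (s n) ≤ ENNReal.ofReal (p n ^ 2) := by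
    intro n
    rw [hμs n, tsub_le_iff_right,
      ← ENNReal.ofReal_add (by positivity) (mul_nonneg (Real.exp_nonneg _) (by linarith [hp n])),
      ← ENNReal.ofReal_one]
    apply ENNReal.ofReal_le_ofReal
    nlinarith [Real.add_one_le_exp (-p n), (hp n).le, hp1 n, Real.exp_pos (-p n)]
  -- lower bound
  have hlb : ∀ n, ENNReal.ofReal (Real.exp (-1) / 2 * p n ^ 2) ≤ μ (s n) := by
    intro n
    refine le_trans ?_ (measure_mono (s := {ω | X n ω = 2}) ?_)
    · rw [hpois n 2]
      apply ENNReal.ofReal_le_ofReal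
      have h1 : Real.exp (-1) ≤ Real.exp (-p n) :=
        Real.exp_le_exp.2 (by linarith [hp1 n])
      have := sq_nonneg (p n)
      simp [Nat.factorial]
      nlinarith
    · intro ω hω; simp only [hs, Set.mem_setOf_eq] at hω ⊢; omega
  constructor
  · intro hsum
    apply measure_limsup_atTop_eq_zero
    have : ∑' n, μ (s n) ≤ ENNReal.ofReal (∑' n, p n ^ 2) := by
      rw [ENNReal.ofReal_tsum_of_nonneg (fun n => by positivity) hsum]
      exact ENNReal.tsum_le_tsum hub
    exact ne_top_of_le_ne_top ENNReal.ofReal_ne_top this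
  · intro hnsum
    have hind : iIndepSet s μ := by
      rw [iIndepSet_iff_meas_biInter hsm]
      intro S
      exact hindep.measure_inter_preimage_eq_mul S
        (sets := fun _ => Set.Ici 2) (fun i _ => measurableSet_Ici)
    apply ProbabilityTheory.measure_limsup_eq_one hsm hind
    by_contra htop
    apply hnsum
    have hsum' : Summable (fun n => Real.exp (-1) / 2 * p n ^ 2) := by
      have h1 : ∑' n, ENNReal.ofReal (Real.exp (-1) / 2 * p n ^ 2) ≠ ⊤ :=
        ne_top_of_le_ne_top htop (ENNReal.tsum_le_tsum hlb)
      have h2 := ENNReal.summable_toReal h1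
      refine h2.congr fun n => ?_
      rw [ENNReal.toReal_ofReal (by positivity)]
    have hc : (0:ℝ) < Real.exp (-1) / 2 := by positivity
    have := hsum'.mul_left (Real.exp (-1) / 2)⁻¹
    refine this.congr fun n => ?_
    rw [← mul_assoc, inv_mul_cancel₀ hc.ne', one_mul]
end

section
/- Let α > 0, let ν_α be the Borel measure on ℂ with density α² |z|^{α−2} with respect to Lebesgue area measure m, and suppose ρ : ℂ → ℝ satisfies ρ(z) > 0 and ν_α(D(z, ρ(z))) = 1 for every z ∈ ℂ. Then there exist constants 0 < c ≤ C such that c (1 + |z|)^{1 − α/2} ≤ ρ(z) ≤ C (1 + |z|)^{1 − α/2} for all z ∈ ℂ. -/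
open MeasureTheory Metric

namespace RhoAux

/-- The measure `ν_α` with density `α²|w|^{α-2}`. -/
noncomputable def nu (α : ℝ) : Measure ℂ :=
  volume.withDensity (fun w : ℂ => ENNReal.ofReal (α ^ 2 * ‖w‖ ^ (α - 2)))

lemma nu_apply (α : ℝ) {S : Set ℂ} (hS : MeasurableSet S) :
    nu α S = ∫⁻ w in S, ENNReal.ofReal (α ^ 2 * ‖w‖ ^ (α - 2)) := by
  rw [nu, withDensity_apply _ hS]

lemma nu_set_le (α M : ℝ) {S : Set ℂ} (hS : MeasurableSet S)
    (h : ∀ w ∈ S, α ^ 2 * ‖w‖ ^ (α - 2) ≤ M) :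
    nu α S ≤ ENNReal.ofReal M * volume S := by
  rw [nu_apply α hS]
  calc ∫⁻ w in S, ENNReal.ofReal (α ^ 2 * ‖w‖ ^ (α - 2))
      ≤ ∫⁻ _ in S, ENNReal.ofReal M :=
        setLIntegral_mono' hS fun w hw => ENNReal.ofReal_le_ofReal (h w hw)
    _ = ENNReal.ofReal M * volume S := setLIntegral_const _ _

lemma nu_set_ge (α m : ℝ) {S : Set ℂ} (hS : MeasurableSet S)
    (h : ∀ w ∈ S, m ≤ α ^ 2 * ‖w‖ ^ (α - 2)) :
    ENNReal.ofReal m * volume S ≤ nu α S := by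
  rw [nu_apply α hS]
  calc ENNReal.ofReal m * volume S = ∫⁻ _ in S, ENNReal.ofReal m :=
        (setLIntegral_const _ _).symm
    _ ≤ _ := setLIntegral_mono' hS fun w hw => ENNReal.ofReal_le_ofReal (h w hw)

lemma vol_ball (z : ℂ) {r : ℝ} (hr : 0 ≤ r) :
    volume (ball z r) = ENNReal.ofReal (Real.pi * r ^ 2) := by
  rw [Complex.volume_ball, ENNReal.ofReal_mul Real.pi_pos.le, ← ENNReal.ofReal_pow hr,
    ← NNReal.coe_real_pi, ENNReal.ofReal_coe_nnreal, mul_comm]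

lemma vol_closedBall (z : ℂ) {r : ℝ} (hr : 0 ≤ r) :
    volume (closedBall z r) = ENNReal.ofReal (Real.pi * r ^ 2) := by
  rw [Complex.volume_closedBall, ENNReal.ofReal_mul Real.pi_pos.le, ← ENNReal.ofReal_pow hr,
    ← NNReal.coe_real_pi, ENNReal.ofReal_coe_nnreal, mul_comm]

lemma nu_ball_le (α M : ℝ) (z : ℂ) {r : ℝ} (hr : 0 ≤ r) (hM : 0 ≤ M)
    (h : ∀ w ∈ ball z r, α ^ 2 * ‖w‖ ^ (α - 2) ≤ M) :
    nu α (ball z r) ≤ ENNReal.ofReal (M * (Real.pi * r ^ 2)) := by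
  rw [ENNReal.ofReal_mul hM, ← vol_ball z hr]
  exact nu_set_le α M measurableSet_ball h

lemma nu_ball_ge (α m : ℝ) (z : ℂ) {r : ℝ} (hr : 0 ≤ r) (hm : 0 ≤ m)
    (h : ∀ w ∈ ball z r, m ≤ α ^ 2 * ‖w‖ ^ (α - 2)) :
    ENNReal.ofReal (m * (Real.pi * r ^ 2)) ≤ nu α (ball z r) := by
  rw [ENNReal.ofReal_mul hm, ← vol_ball z hr]
  exact nu_set_ge α m measurableSet_ball h

lemma rpow_between {a b t c : ℝ} (ha : 0 < a) (h1 : a ≤ t) (h2 : t ≤ b) :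
    min (a ^ c) (b ^ c) ≤ t ^ c ∧ t ^ c ≤ max (a ^ c) (b ^ c) := by
  rcases le_or_gt 0 c with hc | hc
  · exact ⟨min_le_of_left_le (Real.rpow_le_rpow ha.le h1 hc),
      le_max_of_le_right (Real.rpow_le_rpow (ha.le.trans h1) h2 hc)⟩
  · exact ⟨min_le_of_right_le (Real.rpow_le_rpow_of_nonpos (ha.trans_le h1) h2 hc.le),
      le_max_of_le_left (Real.rpow_le_rpow_of_nonpos ha h1 hc.le)⟩

lemma rpow_cancel {t : ℝ} (ht : 0 < t) (α : ℝ) : t ^ (α - 2) * t ^ (2 : ℕ) = t ^ α := by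
  rw [← Real.rpow_natCast t 2, ← Real.rpow_add ht]
  norm_num

lemma le_rpow_inv {s X α : ℝ} (hs : 0 ≤ s) (hα : 0 < α) (h : s ^ α ≤ X) :
    s ≤ X ^ (α⁻¹ : ℝ) := by
  have h2 := Real.rpow_le_rpow (Real.rpow_nonneg hs α) h (inv_nonneg.mpr hα.le)
  rwa [Real.rpow_rpow_inv hs hα.ne'] at h2

lemma le_of_sq_le_sq {x y : ℝ} (hx : 0 ≤ x) (hy : 0 ≤ y) (h : x ^ 2 ≤ y ^ 2) : x ≤ y := by
  have h2 := Real.sqrt_le_sqrt h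
  rwa [Real.sqrt_sq hx, Real.sqrt_sq hy] at h2

lemma rpow_half_sq {x : ℝ} (hx : 0 ≤ x) : (x ^ ((1 : ℝ) / 2)) ^ (2 : ℕ) = x := by
  rw [← Real.rpow_natCast (x ^ ((1 : ℝ) / 2)) 2, ← Real.rpow_mul hx]
  norm_num

lemma rpow_sq {t β : ℝ} (ht : 0 ≤ t) : (t ^ β) ^ (2 : ℕ) = t ^ (β * 2) := by
  rw [← Real.rpow_natCast (t ^ β) 2, ← Real.rpow_mul ht]
  norm_num

lemma abs_bounds_of_mem_ball {z w : ℂ} {r : ℝ} (hw : w ∈ ball z r) :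
    ‖z‖ - r < ‖w‖ ∧ ‖w‖ < ‖z‖ + r := by
  rw [mem_ball, dist_eq_norm] at hw
  have h1 := norm_sub_norm_le w z
  have h2 := norm_sub_norm_le z w
  rw [norm_sub_rev z w] at h2
  constructor <;> linarith

/-- constants -/
noncomputable def kap1 (α : ℝ) : ℝ := min ((2 : ℝ)⁻¹ ^ (α - 2)) ((3 / 2 : ℝ) ^ (α - 2))

noncomputable def kap2 (α : ℝ) : ℝ := max ((2 : ℝ)⁻¹ ^ (α - 2)) ((3 / 2 : ℝ) ^ (α - 2))

noncomputable def kap3 (α : ℝ) : ℝ := min ((2 : ℝ)⁻¹ ^ (α - 2)) 1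

lemma kap1_pos (α : ℝ) : 0 < kap1 α :=
  lt_min (Real.rpow_pos_of_pos (by norm_num) _) (Real.rpow_pos_of_pos (by norm_num) _)

lemma kap2_pos (α : ℝ) : 0 < kap2 α := lt_of_lt_of_le (kap1_pos α) min_le_max

lemma kap3_pos (α : ℝ) : 0 < kap3 α :=
  lt_min (Real.rpow_pos_of_pos (by norm_num) _) one_pos

/-- The density bounds on an off-center ball with `r ≤ |z|/2`. -/
lemma ball_density_bounds (α : ℝ) {z : ℂ} {r : ℝ} (hr : 0 < r)
    (hhalf : r ≤ ‖z‖ / 2) {w : ℂ} (hw : w ∈ ball z r) :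
    α ^ 2 * (kap1 α * ‖z‖ ^ (α - 2)) ≤ α ^ 2 * ‖w‖ ^ (α - 2) ∧
      α ^ 2 * ‖w‖ ^ (α - 2) ≤ α ^ 2 * (kap2 α * ‖z‖ ^ (α - 2)) := by
  have hz : 0 < ‖z‖ := by linarith
  obtain ⟨hw1, hw2⟩ := abs_bounds_of_mem_ball hw
  have h1 : ‖z‖ / 2 ≤ ‖w‖ := by linarith
  have h2 : ‖w‖ ≤ 3 / 2 * ‖z‖ := by linarith
  obtain ⟨hlo, hhi⟩ := rpow_between (a := ‖z‖ / 2) (b := 3 / 2 * ‖z‖)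
    (by positivity) h1 h2 (c := α - 2)
  have e1 : (‖z‖ / 2) ^ (α - 2)
      = (2 : ℝ)⁻¹ ^ (α - 2) * ‖z‖ ^ (α - 2) := by
    rw [div_eq_inv_mul, Real.mul_rpow (by norm_num) (norm_nonneg z)]
  have e2 : (3 / 2 * ‖z‖) ^ (α - 2)
      = (3 / 2 : ℝ) ^ (α - 2) * ‖z‖ ^ (α - 2) :=
    Real.mul_rpow (by norm_num) (norm_nonneg z)
  have hp : (0 : ℝ) ≤ ‖z‖ ^ (α - 2) := Real.rpow_nonneg (norm_nonneg z) _
  rw [e1, e2, ← min_mul_of_nonneg _ _ hp] at hlo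
  rw [e1, e2, ← max_mul_of_nonneg _ _ hp] at hhi
  exact ⟨mul_le_mul_of_nonneg_left hlo (sq_nonneg α),
    mul_le_mul_of_nonneg_left hhi (sq_nonneg α)⟩

lemma kap3_mul (α : ℝ) {s : ℝ} (hs : 0 < s) :
    kap3 α * s ^ (α - 2) = min ((s / 2) ^ (α - 2)) (s ^ (α - 2)) := by
  have e1 : (s / 2) ^ (α - 2) = (2 : ℝ)⁻¹ ^ (α - 2) * s ^ (α - 2) := by
    rw [div_eq_inv_mul, Real.mul_rpow (by norm_num) hs.le]
  rw [e1]
  simp only [kap3]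
  rw [min_mul_of_nonneg _ _ (Real.rpow_nonneg hs.le (α - 2)), one_mul]

noncomputable def R0 (α : ℝ) : ℝ :=
  max 1 ((4 / (α ^ 2 * kap1 α * Real.pi)) ^ (α⁻¹ : ℝ) + 1)

lemma one_le_R0 (α : ℝ) : 1 ≤ R0 α := le_max_left _ _

noncomputable def Pm (α : ℝ) : ℝ :=
  R0 α + ((α ^ 2 * kap3 α * (3 / 4 * Real.pi))⁻¹) ^ (α⁻¹ : ℝ)

lemma R0_ge (α : ℝ) : (4 / (α ^ 2 * kap1 α * Real.pi)) ^ (α⁻¹ : ℝ) + 1 ≤ R0 α := by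
  unfold R0; exact le_max_right _ _

lemma R0_le_Pm (α : ℝ) : R0 α ≤ Pm α :=
  le_add_of_nonneg_right (Real.rpow_nonneg (inv_nonneg.mpr
    (mul_nonneg (mul_nonneg (sq_nonneg α) (kap3_pos α).le) (by positivity))) _)

lemma Pm_pos (α : ℝ) : 0 < Pm α :=
  lt_of_lt_of_le (lt_of_lt_of_le one_pos (one_le_R0 α)) (R0_le_Pm α)

end RhoAux

open RhoAux

/-- Growth of the regularized radius `ρ` for the canonical weight `φ_α(z) = |z|^α`:
if `ν_α(D(z, ρ(z))) = 1` with `ν_α` the measure of density `α²|z|^{α−2}`, then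
`ρ(z) ≍ (1 + |z|)^{1 − α/2}`. -/
theorem rho_alpha_growth (α : ℝ) (hα : 0 < α)
    (ρ : ℂ → ℝ) (hρpos : ∀ z, 0 < ρ z)
    (hρ : ∀ z : ℂ,
      (volume.withDensity
          (fun w : ℂ => ENNReal.ofReal (α ^ 2 * ‖w‖ ^ (α - 2))))
          (ball z (ρ z)) = 1) :
    ∃ c C : ℝ, 0 < c ∧ c ≤ C ∧
      ∀ z : ℂ,
        c * (1 + ‖z‖) ^ (1 - α / 2) ≤ ρ z ∧
        ρ z ≤ C * (1 + ‖z‖) ^ (1 - α / 2) := by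
  have hρ' : ∀ z : ℂ, nu α (ball z (ρ z)) = 1 := hρ
  have hApos : (0:ℝ) < α ^ 2 := pow_pos hα 2
  have hK1 : (0:ℝ) < α ^ 2 * kap1 α * Real.pi :=
    mul_pos (mul_pos hApos (kap1_pos α)) Real.pi_pos
  have hK2 : (0:ℝ) < α ^ 2 * kap2 α * Real.pi :=
    mul_pos (mul_pos hApos (kap2_pos α)) Real.pi_pos
  have keyLow : ∀ (z : ℂ) (r : ℝ), 0 < r → r ≤ ‖z‖ / 2 →
      nu α (ball z r) ≤ 1 →
      α ^ 2 * (kap1 α * ‖z‖ ^ (α - 2)) * (Real.pi * r ^ 2) ≤ 1 := by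
    intro z r hr hhalf hle
    have hb := nu_ball_ge α (α ^ 2 * (kap1 α * ‖z‖ ^ (α - 2))) z hr.le
      (mul_nonneg (sq_nonneg α) (mul_nonneg (kap1_pos α).le
        (Real.rpow_nonneg (norm_nonneg z) _)))
      (fun w hw => (ball_density_bounds α hr hhalf hw).1)
    exact ENNReal.ofReal_le_one.mp (hb.trans hle)
  have keyUp : ∀ (z : ℂ) (r : ℝ), 0 < r → r ≤ ‖z‖ / 2 →
      1 ≤ nu α (ball z r) →
      1 ≤ α ^ 2 * (kap2 α * ‖z‖ ^ (α - 2)) * (Real.pi * r ^ 2) := by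
    intro z r hr hhalf hge
    have hb := nu_ball_le α (α ^ 2 * (kap2 α * ‖z‖ ^ (α - 2))) z hr.le
      (mul_nonneg (sq_nonneg α) (mul_nonneg (kap2_pos α).le
        (Real.rpow_nonneg (norm_nonneg z) _)))
      (fun w hw => (ball_density_bounds α hr hhalf hw).2)
    exact ENNReal.one_le_ofReal.mp (hge.trans hb)
  have hhalf : ∀ z : ℂ, R0 α ≤ ‖z‖ → ρ z ≤ ‖z‖ / 2 := by
    intro z hz
    by_contra hcon
    push_neg at hcon
    have hz1 : (1:ℝ) ≤ ‖z‖ := le_trans (one_le_R0 α) hz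
    have hz0 : (0:ℝ) < ‖z‖ := lt_of_lt_of_le one_pos hz1
    have hrpos : 0 < ‖z‖ / 2 := by linarith
    have hle : nu α (ball z (‖z‖ / 2)) ≤ 1 := by
      rw [← hρ' z]; exact measure_mono (ball_subset_ball hcon.le)
    have hkey := keyLow z _ hrpos le_rfl hle
    have hcalc : α ^ 2 * (kap1 α * ‖z‖ ^ (α - 2)) * (Real.pi * (‖z‖ / 2) ^ 2)
        = α ^ 2 * kap1 α * Real.pi / 4 * ‖z‖ ^ α := by
      linear_combination (α ^ 2 * kap1 α * Real.pi / 4) * rpow_cancel hz0 α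
    rw [hcalc] at hkey
    have hX : (0:ℝ) < 4 / (α ^ 2 * kap1 α * Real.pi) := by positivity
    have h3 : 4 / (α ^ 2 * kap1 α * Real.pi) < ‖z‖ ^ α := by
      have hXz : (4 / (α ^ 2 * kap1 α * Real.pi)) ^ (α⁻¹:ℝ) < ‖z‖ := by
        linarith [le_trans (R0_ge α) hz]
      calc 4 / (α ^ 2 * kap1 α * Real.pi)
          = ((4 / (α ^ 2 * kap1 α * Real.pi)) ^ (α⁻¹:ℝ)) ^ α :=
            (Real.rpow_inv_rpow hX.le hα.ne').symm
        _ < ‖z‖ ^ α := Real.rpow_lt_rpow (Real.rpow_nonneg hX.le _) hXz hα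
    have hfin : (1:ℝ) < α ^ 2 * kap1 α * Real.pi / 4 * ‖z‖ ^ α := by
      have h4 : α ^ 2 * kap1 α * Real.pi / 4 * (4 / (α ^ 2 * kap1 α * Real.pi)) = 1 := by
        field_simp
        exact div_self (kap1_pos α).ne'
      calc (1:ℝ) = α ^ 2 * kap1 α * Real.pi / 4 * (4 / (α ^ 2 * kap1 α * Real.pi)) := h4.symm
        _ < α ^ 2 * kap1 α * Real.pi / 4 * ‖z‖ ^ α :=
            mul_lt_mul_of_pos_left h3 (by positivity)
    linarith
  have hlargeT : ∀ z : ℂ, R0 α ≤ ‖z‖ →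
      ((α ^ 2 * kap2 α * Real.pi)⁻¹) ^ ((1:ℝ)/2) * ‖z‖ ^ (1 - α/2) ≤ ρ z ∧
      ρ z ≤ ((α ^ 2 * kap1 α * Real.pi)⁻¹) ^ ((1:ℝ)/2) * ‖z‖ ^ (1 - α/2) := by
    intro z hz
    have hz1 : (1:ℝ) ≤ ‖z‖ := le_trans (one_le_R0 α) hz
    have hz0 : (0:ℝ) < ‖z‖ := lt_of_lt_of_le one_pos hz1
    have hh := hhalf z hz
    have hL := keyLow z (ρ z) (hρpos z) hh (le_of_eq (hρ' z))
    have hU := keyUp z (ρ z) (hρpos z) hh (ge_of_eq (hρ' z))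
    have hzz : ‖z‖ ^ (2 - α) * ‖z‖ ^ (α - 2) = 1 := by
      rw [← Real.rpow_add hz0]; norm_num
    constructor
    · apply le_of_sq_le_sq
        (mul_nonneg (Real.rpow_nonneg (inv_nonneg.mpr hK2.le) _)
          (Real.rpow_nonneg (norm_nonneg z) _)) (hρpos z).le
      have e : (((α ^ 2 * kap2 α * Real.pi)⁻¹) ^ ((1:ℝ)/2) * ‖z‖ ^ (1 - α/2)) ^ 2
          = (α ^ 2 * kap2 α * Real.pi)⁻¹ * ‖z‖ ^ (2 - α) := by
        rw [mul_pow, rpow_half_sq (inv_nonneg.mpr hK2.le), rpow_sq (norm_nonneg z),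
          show (1 - α/2) * 2 = 2 - α by ring]
      rw [e]
      have hprod : (α ^ 2 * kap2 α * Real.pi)⁻¹ * ‖z‖ ^ (2 - α)
          * (α ^ 2 * (kap2 α * ‖z‖ ^ (α - 2)) * (Real.pi * ρ z ^ 2)) = ρ z ^ 2 := by
        calc (α ^ 2 * kap2 α * Real.pi)⁻¹ * ‖z‖ ^ (2 - α)
            * (α ^ 2 * (kap2 α * ‖z‖ ^ (α - 2)) * (Real.pi * ρ z ^ 2))
            = ((α ^ 2 * kap2 α * Real.pi)⁻¹ * (α ^ 2 * kap2 α * Real.pi))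
              * (‖z‖ ^ (2 - α) * ‖z‖ ^ (α - 2)) * ρ z ^ 2 := by ring
          _ = ρ z ^ 2 := by rw [inv_mul_cancel₀ hK2.ne', hzz, one_mul, one_mul]
      have hkey := mul_le_mul_of_nonneg_left hU
        (mul_nonneg (inv_nonneg.mpr hK2.le) (Real.rpow_nonneg (norm_nonneg z) (2 - α)))
      rw [mul_one, hprod] at hkey
      exact hkey
    · apply le_of_sq_le_sq (hρpos z).le
        (mul_nonneg (Real.rpow_nonneg (inv_nonneg.mpr hK1.le) _)
          (Real.rpow_nonneg (norm_nonneg z) _))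
      have e : (((α ^ 2 * kap1 α * Real.pi)⁻¹) ^ ((1:ℝ)/2) * ‖z‖ ^ (1 - α/2)) ^ 2
          = (α ^ 2 * kap1 α * Real.pi)⁻¹ * ‖z‖ ^ (2 - α) := by
        rw [mul_pow, rpow_half_sq (inv_nonneg.mpr hK1.le), rpow_sq (norm_nonneg z),
          show (1 - α/2) * 2 = 2 - α by ring]
      rw [e]
      have hprod : (α ^ 2 * kap1 α * Real.pi)⁻¹ * ‖z‖ ^ (2 - α)
          * (α ^ 2 * (kap1 α * ‖z‖ ^ (α - 2)) * (Real.pi * ρ z ^ 2)) = ρ z ^ 2 := by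
        calc (α ^ 2 * kap1 α * Real.pi)⁻¹ * ‖z‖ ^ (2 - α)
            * (α ^ 2 * (kap1 α * ‖z‖ ^ (α - 2)) * (Real.pi * ρ z ^ 2))
            = ((α ^ 2 * kap1 α * Real.pi)⁻¹ * (α ^ 2 * kap1 α * Real.pi))
              * (‖z‖ ^ (2 - α) * ‖z‖ ^ (α - 2)) * ρ z ^ 2 := by ring
          _ = ρ z ^ 2 := by rw [inv_mul_cancel₀ hK1.ne', hzz, one_mul, one_mul]
      have hkey := mul_le_mul_of_nonneg_left hL
        (mul_nonneg (inv_nonneg.mpr hK1.le) (Real.rpow_nonneg (norm_nonneg z) (2 - α)))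
      rw [mul_one, hprod] at hkey
      exact hkey
  have hconv : ∀ z : ℂ, 1 ≤ ‖z‖ →
      min 1 ((2:ℝ) ^ (1 - α/2)) * ‖z‖ ^ (1 - α/2)
        ≤ (1 + ‖z‖) ^ (1 - α/2) ∧
      (1 + ‖z‖) ^ (1 - α/2)
        ≤ max 1 ((2:ℝ) ^ (1 - α/2)) * ‖z‖ ^ (1 - α/2) := by
    intro z hz1
    have ht0 : (0:ℝ) < ‖z‖ := lt_of_lt_of_le one_pos hz1
    obtain ⟨hlo, hhi⟩ := rpow_between (a := ‖z‖) (t := 1 + ‖z‖)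
      (b := 2 * ‖z‖) ht0 (by linarith) (by linarith) (c := 1 - α/2)
    have e2 : (2 * ‖z‖) ^ (1 - α/2)
        = (2:ℝ) ^ (1 - α/2) * ‖z‖ ^ (1 - α/2) :=
      Real.mul_rpow (by norm_num) ht0.le
    have hp : (0:ℝ) ≤ ‖z‖ ^ (1 - α/2) := Real.rpow_nonneg (norm_nonneg z) _
    constructor
    · rw [min_mul_of_nonneg _ _ hp, one_mul]
      rw [e2] at hlo; exact hlo
    · rw [max_mul_of_nonneg _ _ hp, one_mul]
      rw [e2] at hhi; exact hhi
  have hm1 : (0:ℝ) < min 1 ((2:ℝ) ^ (1 - α/2)) :=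
    lt_min one_pos (Real.rpow_pos_of_pos two_pos _)
  have hm2 : (0:ℝ) < max 1 ((2:ℝ) ^ (1 - α/2)) := lt_of_lt_of_le hm1 min_le_max
  have hlarge : ∀ z : ℂ, R0 α ≤ ‖z‖ →
      (((α ^ 2 * kap2 α * Real.pi)⁻¹) ^ ((1:ℝ)/2) / max 1 ((2:ℝ) ^ (1 - α/2)))
        * (1 + ‖z‖) ^ (1 - α/2) ≤ ρ z ∧
      ρ z ≤ (((α ^ 2 * kap1 α * Real.pi)⁻¹) ^ ((1:ℝ)/2) / min 1 ((2:ℝ) ^ (1 - α/2)))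
        * (1 + ‖z‖) ^ (1 - α/2) := by
    intro z hz
    have hz1 : (1:ℝ) ≤ ‖z‖ := le_trans (one_le_R0 α) hz
    obtain ⟨hc1, hc2⟩ := hconv z hz1
    obtain ⟨hb1, hb2⟩ := hlargeT z hz
    have ha1 : (0:ℝ) ≤ ((α ^ 2 * kap2 α * Real.pi)⁻¹) ^ ((1:ℝ)/2) :=
      Real.rpow_nonneg (inv_nonneg.mpr hK2.le) _
    have ha2 : (0:ℝ) ≤ ((α ^ 2 * kap1 α * Real.pi)⁻¹) ^ ((1:ℝ)/2) :=
      Real.rpow_nonneg (inv_nonneg.mpr hK1.le) _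
    have hm1ne := hm1.ne'
    have hm2ne := hm2.ne'
    constructor
    · calc (((α ^ 2 * kap2 α * Real.pi)⁻¹) ^ ((1:ℝ)/2) / max 1 ((2:ℝ) ^ (1 - α/2)))
            * (1 + ‖z‖) ^ (1 - α/2)
          ≤ (((α ^ 2 * kap2 α * Real.pi)⁻¹) ^ ((1:ℝ)/2) / max 1 ((2:ℝ) ^ (1 - α/2)))
            * (max 1 ((2:ℝ) ^ (1 - α/2)) * ‖z‖ ^ (1 - α/2)) :=
          mul_le_mul_of_nonneg_left hc2 (div_nonneg ha1 hm2.le)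
        _ = ((α ^ 2 * kap2 α * Real.pi)⁻¹) ^ ((1:ℝ)/2) * ‖z‖ ^ (1 - α/2) := by
          field_simp
        _ ≤ ρ z := hb1
    · calc ρ z ≤ ((α ^ 2 * kap1 α * Real.pi)⁻¹) ^ ((1:ℝ)/2) * ‖z‖ ^ (1 - α/2) := hb2
        _ = (((α ^ 2 * kap1 α * Real.pi)⁻¹) ^ ((1:ℝ)/2) / min 1 ((2:ℝ) ^ (1 - α/2)))
            * (min 1 ((2:ℝ) ^ (1 - α/2)) * ‖z‖ ^ (1 - α/2)) := by
          field_simp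
        _ ≤ (((α ^ 2 * kap1 α * Real.pi)⁻¹) ^ ((1:ℝ)/2) / min 1 ((2:ℝ) ^ (1 - α/2)))
            * (1 + ‖z‖) ^ (1 - α/2) :=
          mul_le_mul_of_nonneg_left hc1 (div_nonneg ha2 hm1.le)
  have hsmall_up : ∀ z : ℂ, ‖z‖ ≤ R0 α → ρ z ≤ Pm α := by
    intro z hz
    rcases le_or_gt (ρ z) (R0 α) with h | h
    · exact h.trans (R0_le_Pm α)
    · have hspos : 0 < ρ z - ‖z‖ := by
        have := one_le_R0 α
        have h0 := norm_nonneg z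
        linarith
      set s : ℝ := ρ z - ‖z‖ with hs
      have hsub : ball (0:ℂ) s ⊆ ball z (ρ z) := by
        intro w hw
        rw [mem_ball] at hw ⊢
        have h1 : dist w z ≤ dist w 0 + dist 0 z := dist_triangle _ _ _
        have h2 : dist (0:ℂ) z = ‖z‖ := by
          rw [dist_zero_left]
        rw [h2] at h1
        linarith
      have hle1 : nu α (ball (0:ℂ) s) ≤ 1 := by
        rw [← hρ' z]; exact measure_mono hsub
      have hAmeas : MeasurableSet (ball (0:ℂ) s \ closedBall (0:ℂ) (s/2)) :=
        measurableSet_ball.diff measurableSet_closedBall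
      have hdens : ∀ w ∈ ball (0:ℂ) s \ closedBall (0:ℂ) (s/2),
          α ^ 2 * (kap3 α * s ^ (α - 2)) ≤ α ^ 2 * ‖w‖ ^ (α - 2) := by
        intro w hw
        obtain ⟨hw1, hw2⟩ := hw
        rw [mem_ball, Complex.dist_eq, sub_zero] at hw1
        rw [mem_closedBall, Complex.dist_eq, sub_zero] at hw2
        push_neg at hw2
        obtain ⟨hlo, -⟩ := rpow_between (a := s/2) (b := s) (by positivity) hw2.le hw1.le
          (c := α - 2)
        rw [← kap3_mul α hspos] at hlo
        exact mul_le_mul_of_nonneg_left hlo (sq_nonneg α)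
      have hgeA := nu_set_ge α (α ^ 2 * (kap3 α * s ^ (α - 2))) hAmeas hdens
      have hvol : volume (ball (0:ℂ) s \ closedBall (0:ℂ) (s/2))
          = ENNReal.ofReal (3/4 * Real.pi * s ^ 2) := by
        rw [measure_diff (closedBall_subset_ball (by linarith))
          measurableSet_closedBall.nullMeasurableSet measure_closedBall_lt_top.ne,
          vol_ball _ hspos.le, vol_closedBall _ (by positivity),
          ← ENNReal.ofReal_sub _ (by positivity)]
        congr 1
        ring
      rw [hvol, ← ENNReal.ofReal_mul (mul_nonneg (sq_nonneg α)
        (mul_nonneg (kap3_pos α).le (Real.rpow_nonneg hspos.le _)))] at hgeA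
      have hle2 : α ^ 2 * (kap3 α * s ^ (α - 2)) * (3/4 * Real.pi * s ^ 2) ≤ 1 :=
        ENNReal.ofReal_le_one.mp (hgeA.trans ((measure_mono Set.diff_subset).trans hle1))
      have hcalc : α ^ 2 * (kap3 α * s ^ (α - 2)) * (3/4 * Real.pi * s ^ 2)
          = α ^ 2 * kap3 α * (3/4 * Real.pi) * s ^ α := by
        linear_combination (α ^ 2 * kap3 α * (3/4 * Real.pi)) * rpow_cancel hspos α
      rw [hcalc] at hle2
      have hE : (0:ℝ) < α ^ 2 * kap3 α * (3/4 * Real.pi) :=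
        mul_pos (mul_pos hApos (kap3_pos α)) (by positivity)
      have hsα : s ^ α ≤ (α ^ 2 * kap3 α * (3/4 * Real.pi))⁻¹ := by
        rw [← one_div, le_div_iff₀ hE]
        calc s ^ α * (α ^ 2 * kap3 α * (3/4 * Real.pi))
            = α ^ 2 * kap3 α * (3/4 * Real.pi) * s ^ α := by ring
          _ ≤ 1 := hle2
      have hsY := le_rpow_inv hspos.le hα hsα
      have hfin : ρ z ≤ R0 α + ((α ^ 2 * kap3 α * (3/4 * Real.pi))⁻¹) ^ (α⁻¹:ℝ) := by
        have he : ρ z = ‖z‖ + s := by rw [hs]; ring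
        rw [he]
        exact add_le_add hz hsY
      simpa [Pm] using hfin
  have hsmall_low : ∃ δ : ℝ, 0 < δ ∧ ∀ z : ℂ, ‖z‖ ≤ R0 α → δ ≤ ρ z := by
    rcases le_or_gt α 2 with hα2 | hα2
    · have hsRpos : ∀ n : ℕ, (0:ℝ) < ρ 0 * 2⁻¹ ^ n := fun n =>
        mul_pos (hρpos 0) (by positivity)
      have hanti : Antitone fun n : ℕ => ball (0:ℂ) (ρ 0 * 2⁻¹ ^ n) := by
        intro m n hmn
        exact ball_subset_ball (mul_le_mul_of_nonneg_left
          (pow_le_pow_of_le_one (by norm_num) (by norm_num) hmn) (hρpos 0).le)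
      have hiInter : (⋂ n : ℕ, ball (0:ℂ) (ρ 0 * 2⁻¹ ^ n)) = {0} := by
        ext w
        simp only [Set.mem_iInter, mem_ball, Set.mem_singleton_iff]
        constructor
        · intro h
          by_contra hw
          have hd : 0 < dist w 0 := dist_pos.mpr hw
          obtain ⟨n, hn⟩ := exists_pow_lt_of_lt_one
            (div_pos hd (hρpos 0)) (by norm_num : (2⁻¹:ℝ) < 1)
          have h2 : ρ 0 * 2⁻¹ ^ n < dist w 0 := by
            have h3 := mul_lt_mul_of_pos_left hn (hρpos 0)
            rwa [mul_div_cancel₀ _ (hρpos 0).ne'] at h3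
          linarith [h n]
        · rintro rfl n
          simpa using hsRpos n
      have hfin : nu α (ball (0:ℂ) (ρ 0 * 2⁻¹ ^ 0)) ≠ ⊤ := by
        rw [pow_zero, mul_one, hρ' 0]
        exact ENNReal.one_ne_top
      have htend := tendsto_measure_iInter_atTop (μ := nu α)
        (fun n => measurableSet_ball.nullMeasurableSet) hanti ⟨0, hfin⟩
      rw [hiInter] at htend
      have hzero : nu α ({(0:ℂ)} : Set ℂ) = 0 :=
        withDensity_absolutelyContinuous volume _ (measure_singleton 0)
      rw [hzero] at htend
      obtain ⟨n, hn⟩ := (htend.eventually_lt_const (by norm_num : (0:ENNReal) < 2⁻¹)).exists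
      simp only [Function.comp_apply] at hn
      have hEpos : (0:ℝ) < α ^ 2 * (2:ℝ) ^ (α - 2) * Real.pi :=
        mul_pos (mul_pos hApos (Real.rpow_pos_of_pos two_pos _)) Real.pi_pos
      have hγpos : 0 < ((2 * (α ^ 2 * (2:ℝ) ^ (α - 2) * Real.pi))⁻¹) ^ (α⁻¹:ℝ) :=
        Real.rpow_pos_of_pos (inv_pos.mpr (mul_pos two_pos hEpos)) _
      refine ⟨min (ρ 0 * 2⁻¹ ^ n / 2) (((2 * (α ^ 2 * (2:ℝ) ^ (α - 2) * Real.pi))⁻¹) ^ (α⁻¹:ℝ)),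
        lt_min (div_pos (hsRpos n) two_pos) hγpos, ?_⟩
      intro z hz
      by_contra hcon
      push_neg at hcon
      have h1 : ρ z < ρ 0 * 2⁻¹ ^ n / 2 := lt_of_lt_of_le hcon (min_le_left _ _)
      have h2 : ρ z < ((2 * (α ^ 2 * (2:ℝ) ^ (α - 2) * Real.pi))⁻¹) ^ (α⁻¹:ℝ) :=
        lt_of_lt_of_le hcon (min_le_right _ _)
      have hrpos := hρpos z
      have hsplit := measure_le_inter_add_diff (nu α) (ball z (ρ z)) (ball (0:ℂ) (2 * ρ z))
      have hnear : nu α (ball z (ρ z) ∩ ball (0:ℂ) (2 * ρ z))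
          ≤ nu α (ball (0:ℂ) (ρ 0 * 2⁻¹ ^ n)) :=
        measure_mono (Set.inter_subset_right.trans (ball_subset_ball (by linarith)))
      have hfar : nu α (ball z (ρ z) \ ball (0:ℂ) (2 * ρ z)) ≤ ENNReal.ofReal 2⁻¹ := by
        have hd : ∀ w ∈ ball z (ρ z) \ ball (0:ℂ) (2 * ρ z),
            α ^ 2 * ‖w‖ ^ (α - 2) ≤ α ^ 2 * (2 * ρ z) ^ (α - 2) := by
          intro w hw
          obtain ⟨-, hw2⟩ := hw
          rw [mem_ball, Complex.dist_eq, sub_zero] at hw2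
          push_neg at hw2
          exact mul_le_mul_of_nonneg_left
            (Real.rpow_le_rpow_of_nonpos (by positivity) hw2 (by linarith)) (sq_nonneg α)
        have h3 := nu_set_le α (α ^ 2 * (2 * ρ z) ^ (α - 2))
          (measurableSet_ball.diff measurableSet_ball) hd
        have h4 : volume (ball z (ρ z) \ ball (0:ℂ) (2 * ρ z))
            ≤ ENNReal.ofReal (Real.pi * ρ z ^ 2) := by
          rw [← vol_ball z hrpos.le]
          exact measure_mono Set.diff_subset
        have h5 : (0:ℝ) ≤ α ^ 2 * (2 * ρ z) ^ (α - 2) :=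
          mul_nonneg (sq_nonneg α) (Real.rpow_nonneg (by positivity) _)
        have e1 : α ^ 2 * (2 * ρ z) ^ (α - 2) * (Real.pi * ρ z ^ 2)
            = α ^ 2 * (2:ℝ) ^ (α - 2) * Real.pi * ρ z ^ α := by
          rw [Real.mul_rpow (by norm_num) hrpos.le]
          linear_combination (α ^ 2 * (2:ℝ) ^ (α - 2) * Real.pi) * rpow_cancel hrpos α
        have hγα : (((2 * (α ^ 2 * (2:ℝ) ^ (α - 2) * Real.pi))⁻¹) ^ (α⁻¹:ℝ)) ^ α
            = (2 * (α ^ 2 * (2:ℝ) ^ (α - 2) * Real.pi))⁻¹ :=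
          Real.rpow_inv_rpow (inv_nonneg.mpr (mul_nonneg zero_le_two hEpos.le)) hα.ne'
        have hreal : α ^ 2 * (2 * ρ z) ^ (α - 2) * (Real.pi * ρ z ^ 2) ≤ 2⁻¹ := by
          rw [e1]
          have h6 : ρ z ^ α ≤ (((2 * (α ^ 2 * (2:ℝ) ^ (α - 2) * Real.pi))⁻¹) ^ (α⁻¹:ℝ)) ^ α :=
            Real.rpow_le_rpow hrpos.le h2.le hα.le
          rw [hγα] at h6
          calc α ^ 2 * (2:ℝ) ^ (α - 2) * Real.pi * ρ z ^ α
              ≤ α ^ 2 * (2:ℝ) ^ (α - 2) * Real.pi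
                * (2 * (α ^ 2 * (2:ℝ) ^ (α - 2) * Real.pi))⁻¹ :=
                mul_le_mul_of_nonneg_left h6 hEpos.le
            _ = 2⁻¹ := by
                field_simp
        calc nu α (ball z (ρ z) \ ball (0:ℂ) (2 * ρ z))
            ≤ ENNReal.ofReal (α ^ 2 * (2 * ρ z) ^ (α - 2))
              * volume (ball z (ρ z) \ ball (0:ℂ) (2 * ρ z)) := h3
          _ ≤ ENNReal.ofReal (α ^ 2 * (2 * ρ z) ^ (α - 2))
              * ENNReal.ofReal (Real.pi * ρ z ^ 2) := mul_le_mul_right h4 _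
          _ = ENNReal.ofReal (α ^ 2 * (2 * ρ z) ^ (α - 2) * (Real.pi * ρ z ^ 2)) :=
              (ENNReal.ofReal_mul h5).symm
          _ ≤ ENNReal.ofReal 2⁻¹ := ENNReal.ofReal_le_ofReal hreal
      have hone : nu α (ball z (ρ z)) < 1 := by
        have hhalfE : ENNReal.ofReal ((2:ℝ)⁻¹) = (2⁻¹ : ENNReal) := by
          rw [ENNReal.ofReal_inv_of_pos two_pos, ENNReal.ofReal_ofNat]
        calc nu α (ball z (ρ z))
            ≤ nu α (ball z (ρ z) ∩ ball (0:ℂ) (2 * ρ z))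
              + nu α (ball z (ρ z) \ ball (0:ℂ) (2 * ρ z)) := hsplit
          _ ≤ nu α (ball (0:ℂ) (ρ 0 * 2⁻¹ ^ n)) + ENNReal.ofReal 2⁻¹ := add_le_add hnear hfar
          _ < 2⁻¹ + 2⁻¹ := ENNReal.add_lt_add_of_lt_of_le ENNReal.ofReal_ne_top hn hhalfE.le
          _ = 1 := ENNReal.inv_two_add_inv_two
      rw [hρ' z] at hone
      exact lt_irrefl _ hone
    · have hTpos : (0:ℝ) < R0 α + Pm α := by
        have h1 := one_le_R0 α
        have h2 := Pm_pos α
        linarith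
      have hTpow : (0:ℝ) < α ^ 2 * (R0 α + Pm α) ^ (α - 2) * Real.pi :=
        mul_pos (mul_pos hApos (Real.rpow_pos_of_pos hTpos _)) Real.pi_pos
      refine ⟨Real.sqrt ((α ^ 2 * (R0 α + Pm α) ^ (α - 2) * Real.pi)⁻¹),
        Real.sqrt_pos.mpr (inv_pos.mpr hTpow), ?_⟩
      intro z hz
      have hup := hsmall_up z hz
      have hd : ∀ w ∈ ball z (ρ z),
          α ^ 2 * ‖w‖ ^ (α - 2) ≤ α ^ 2 * (R0 α + Pm α) ^ (α - 2) := by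
        intro w hw
        obtain ⟨-, hw2⟩ := abs_bounds_of_mem_ball hw
        have h1 : ‖w‖ ≤ R0 α + Pm α := by linarith
        exact mul_le_mul_of_nonneg_left
          (Real.rpow_le_rpow (norm_nonneg w) h1 (by linarith)) (sq_nonneg α)
      have h3 := nu_ball_le α (α ^ 2 * (R0 α + Pm α) ^ (α - 2)) z (hρpos z).le
        (mul_nonneg (sq_nonneg α) (Real.rpow_nonneg hTpos.le _)) hd
      have h4 : (1:ℝ) ≤ α ^ 2 * (R0 α + Pm α) ^ (α - 2) * (Real.pi * ρ z ^ 2) :=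
        ENNReal.one_le_ofReal.mp ((le_of_eq (hρ' z).symm).trans h3)
      have h5 : (α ^ 2 * (R0 α + Pm α) ^ (α - 2) * Real.pi)⁻¹ ≤ ρ z ^ 2 := by
        rw [← one_div, div_le_iff₀ hTpow]
        calc (1:ℝ) ≤ α ^ 2 * (R0 α + Pm α) ^ (α - 2) * (Real.pi * ρ z ^ 2) := h4
          _ = ρ z ^ 2 * (α ^ 2 * (R0 α + Pm α) ^ (α - 2) * Real.pi) := by ring
      calc Real.sqrt ((α ^ 2 * (R0 α + Pm α) ^ (α - 2) * Real.pi)⁻¹)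
          ≤ Real.sqrt (ρ z ^ 2) := Real.sqrt_le_sqrt h5
        _ = ρ z := Real.sqrt_sq (hρpos z).le
  obtain ⟨δ, hδpos, hδ⟩ := hsmall_low
  have hR0pos : (0:ℝ) < R0 α := lt_of_lt_of_le one_pos (one_le_R0 α)
  have he1 : (0:ℝ) < min (1:ℝ) ((1 + R0 α) ^ (1 - α/2)) :=
    lt_min one_pos (Real.rpow_pos_of_pos (by linarith) _)
  have he2 : (0:ℝ) < max (1:ℝ) ((1 + R0 α) ^ (1 - α/2)) :=
    lt_of_lt_of_le he1 min_le_max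
  have hsconv : ∀ z : ℂ, ‖z‖ ≤ R0 α →
      min (1:ℝ) ((1 + R0 α) ^ (1 - α/2)) ≤ (1 + ‖z‖) ^ (1 - α/2) ∧
      (1 + ‖z‖) ^ (1 - α/2)
        ≤ max (1:ℝ) ((1 + R0 α) ^ (1 - α/2)) := by
    intro z hz
    have h0 := norm_nonneg z
    have h := rpow_between (a := (1:ℝ)) (t := 1 + ‖z‖) (b := 1 + R0 α)
      one_pos (by linarith) (by linarith) (c := 1 - α/2)
    simpa [Real.one_rpow] using h
  have main : ∀ z : ℂ,
      min (((α ^ 2 * kap2 α * Real.pi)⁻¹) ^ ((1:ℝ)/2) / max 1 ((2:ℝ) ^ (1 - α/2)))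
          (δ / max (1:ℝ) ((1 + R0 α) ^ (1 - α/2)))
        * (1 + ‖z‖) ^ (1 - α / 2) ≤ ρ z ∧
      ρ z ≤ max (((α ^ 2 * kap1 α * Real.pi)⁻¹) ^ ((1:ℝ)/2) / min 1 ((2:ℝ) ^ (1 - α/2)))
          (Pm α / min (1:ℝ) ((1 + R0 α) ^ (1 - α/2)))
        * (1 + ‖z‖) ^ (1 - α / 2) := by
    intro z
    have h0 := norm_nonneg z
    have hupos : (0:ℝ) < (1 + ‖z‖) ^ (1 - α/2) :=
      Real.rpow_pos_of_pos (by linarith) _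
    rcases le_total (‖z‖) (R0 α) with hz | hz
    · obtain ⟨hc1, hc2⟩ := hsconv z hz
      have hl := hδ z hz
      have hu := hsmall_up z hz
      constructor
      · refine le_trans (mul_le_mul_of_nonneg_right (min_le_right _ _) hupos.le) ?_
        calc (δ / max (1:ℝ) ((1 + R0 α) ^ (1 - α/2)))
              * (1 + ‖z‖) ^ (1 - α/2)
            ≤ (δ / max (1:ℝ) ((1 + R0 α) ^ (1 - α/2)))
              * max (1:ℝ) ((1 + R0 α) ^ (1 - α/2)) :=
              mul_le_mul_of_nonneg_left hc2 (div_nonneg hδpos.le he2.le)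
          _ = δ := div_mul_cancel₀ δ he2.ne'
          _ ≤ ρ z := hl
      · refine le_trans ?_ (mul_le_mul_of_nonneg_right (le_max_right _ _) hupos.le)
        calc ρ z ≤ Pm α := hu
          _ = (Pm α / min (1:ℝ) ((1 + R0 α) ^ (1 - α/2)))
              * min (1:ℝ) ((1 + R0 α) ^ (1 - α/2)) :=
              (div_mul_cancel₀ (Pm α) he1.ne').symm
          _ ≤ (Pm α / min (1:ℝ) ((1 + R0 α) ^ (1 - α/2)))
              * (1 + ‖z‖) ^ (1 - α/2) :=
              mul_le_mul_of_nonneg_left hc1 (div_nonneg (Pm_pos α).le he1.le)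
    · obtain ⟨h1, h2⟩ := hlarge z hz
      exact ⟨le_trans (mul_le_mul_of_nonneg_right (min_le_left _ _) hupos.le) h1,
        le_trans h2 (mul_le_mul_of_nonneg_right (le_max_left _ _) hupos.le)⟩
  have hcpos : 0 < min (((α ^ 2 * kap2 α * Real.pi)⁻¹) ^ ((1:ℝ)/2) / max 1 ((2:ℝ) ^ (1 - α/2)))
      (δ / max (1:ℝ) ((1 + R0 α) ^ (1 - α/2))) :=
    lt_min (div_pos (Real.rpow_pos_of_pos (inv_pos.mpr hK2) _) hm2) (div_pos hδpos he2)
  refine ⟨_, _, hcpos, ?_, main⟩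
  have h00 := main 0
  simp only [norm_zero, add_zero, Real.one_rpow, mul_one] at h00
  exact h00.1.trans h00.2
end

section
/- Let α > 0, let ν_α be the Borel measure on ℂ with density α² |z|^{α−2} with respect to Lebesgue area measure m, and suppose ρ : ℂ → ℝ satisfies ρ(z) > 0 and ν_α(D(z, ρ(z))) = 1 for every z ∈ ℂ. Then for every γ > 0, the integral ∫_ℂ ρ(z)^{−γ} dm(z) is finite if and only if α < 2 − 4/γ. In particular, ∫_ℂ ρ(z)^{−6} dm(z) < ∞ if and only if α < 4/3, and ∫_ℂ ρ(z)^{−4} dm(z) < ∞ if and only if α < 1. -/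
open MeasureTheory Metric Set
open scoped ENNReal NNReal


lemma hpi_ofReal : (NNReal.pi : ℝ≥0∞) = ENNReal.ofReal Real.pi := by
  rw [← NNReal.coe_real_pi, ENNReal.ofReal_coe_nnreal]

lemma lintegral_inv_sq_top {R : ℝ} (hR : 0 < R) :
    ∫⁻ z : ℂ in (closedBall 0 R)ᶜ, ENNReal.ofReal (‖z‖ ^ (-2 : ℝ)) = ⊤ := by
  set A : ℕ → Set ℂ := fun n => ball 0 (R * 2 ^ (n + 2)) \ ball 0 (R * 2 ^ (n + 1)) with hA
  have hmeas : ∀ n, MeasurableSet (A n) := fun n => measurableSet_ball.diff measurableSet_ball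
  have hsub : (⋃ n, A n) ⊆ (closedBall (0:ℂ) R)ᶜ := by
    rintro z hz
    simp only [mem_iUnion] at hz
    obtain ⟨n, _, hz2⟩ := hz
    rw [mem_ball_zero_iff, not_lt] at hz2
    rw [mem_compl_iff, mem_closedBall_zero_iff, not_le]
    have h2 : (2:ℝ) ≤ 2 ^ (n+1) := by
      calc (2:ℝ) = 2^1 := by norm_num
      _ ≤ 2^(n+1) := pow_le_pow_right₀ one_le_two (by omega)
    nlinarith
  have hdisj : Pairwise (Function.onFun Disjoint A) := by
    have key : ∀ n m, n < m → Disjoint (A n) (A m) := by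
      intro n m hnm
      refine Set.disjoint_left.mpr ?_
      rintro z ⟨hz1, _⟩ ⟨_, hz2⟩
      rw [mem_ball_zero_iff] at hz1
      rw [mem_ball_zero_iff, not_lt] at hz2
      have : R * 2 ^ (n+2) ≤ R * 2 ^ (m+1) := by
        have : (2:ℝ) ^ (n+2) ≤ 2 ^ (m+1) := pow_le_pow_right₀ one_le_two (by omega)
        nlinarith
      linarith
    intro n m hnm
    rcases hnm.lt_or_gt with h | h
    · exact key n m h
    · exact (key m n h).symm
  have hlow : ∀ n : ℕ, ENNReal.ofReal (3/4) * (NNReal.pi : ℝ≥0∞) ≤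
      ∫⁻ z in A n, ENNReal.ofReal (‖z‖ ^ (-2:ℝ)) := by
    intro n
    set r := R * 2 ^ (n+1) with hr
    have hrpos : 0 < r := by positivity
    have hbig : R * 2 ^ (n+2) = 2 * r := by rw [hr]; ring
    have hvol : volume (A n) = ENNReal.ofReal (3 * r^2) * (NNReal.pi : ℝ≥0∞) := by
      rw [hA]
      simp only
      rw [measure_diff (ball_subset_ball (by nlinarith)) measurableSet_ball.nullMeasurableSet
        measure_ball_lt_top.ne, Complex.volume_ball, Complex.volume_ball, hbig, ← hr,
        ← ENNReal.sub_mul (by intro _ _; exact ENNReal.coe_ne_top),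
        ← ENNReal.ofReal_pow (by positivity), ← ENNReal.ofReal_pow hrpos.le,
        ← ENNReal.ofReal_sub _ (by positivity)]
      congr 2
      ring
    have hconst : ENNReal.ofReal (3/4) * (NNReal.pi : ℝ≥0∞) =
        ENNReal.ofReal ((2*r) ^ (-2:ℝ)) * volume (A n) := by
      rw [hvol, ← mul_assoc, ← ENNReal.ofReal_mul (by positivity)]
      congr 2
      have h2 : (2*r) ^ (-2:ℝ) = ((2*r)^(2:ℕ))⁻¹ := by
        rw [← Real.rpow_natCast (2*r) 2, ← Real.rpow_neg (by positivity)]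
        norm_num
      rw [h2]
      field_simp
      ring
    rw [hconst]
    calc ENNReal.ofReal ((2*r) ^ (-2:ℝ)) * volume (A n)
        = ∫⁻ _ in A n, ENNReal.ofReal ((2*r) ^ (-2:ℝ)) := (setLIntegral_const _ _).symm
      _ ≤ _ := by
          apply setLIntegral_mono' (hmeas n)
          intro z hz
          obtain ⟨hz1, hz2⟩ := hz
          rw [mem_ball_zero_iff] at hz1
          rw [mem_ball_zero_iff, not_lt] at hz2
          apply ENNReal.ofReal_le_ofReal
          apply Real.rpow_le_rpow_of_nonpos (lt_of_lt_of_le hrpos hz2) _ (by norm_num)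
          rw [hbig] at hz1; exact hz1.le
  refine eq_top_iff.mpr ?_
  calc (⊤:ℝ≥0∞) = ∑' _ : ℕ, (ENNReal.ofReal (3/4) * (NNReal.pi : ℝ≥0∞)) := by
        refine (ENNReal.tsum_const_eq_top_of_ne_zero ?_).symm
        refine mul_ne_zero (by simp) ?_
        simp only [ne_eq, ENNReal.coe_eq_zero]
        intro h
        have := NNReal.coe_real_pi
        rw [h] at this
        exact Real.pi_ne_zero (by simpa using this.symm)
    _ ≤ ∑' n, ∫⁻ z in A n, ENNReal.ofReal (‖z‖ ^ (-2:ℝ)) := ENNReal.tsum_le_tsum hlow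
    _ = ∫⁻ z in ⋃ n, A n, ENNReal.ofReal (‖z‖ ^ (-2:ℝ)) := (lintegral_iUnion hmeas hdisj _).symm
    _ ≤ _ := lintegral_mono_set hsub


lemma finite_near_zero {α : ℝ} (hα : 0 < α) :
    ∫⁻ w : ℂ in ball 0 1, ENNReal.ofReal (‖w‖ ^ (α - 2)) < ⊤ := by
  set B : ℕ → Set ℂ := fun n => ball 0 ((2:ℝ)⁻¹ ^ n) \ ball 0 ((2:ℝ)⁻¹ ^ (n+1)) with hB
  have hcover : ball (0:ℂ) 1 ⊆ {0} ∪ ⋃ n, B n := by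
    intro w hw
    rw [mem_ball_zero_iff] at hw
    by_cases hw0 : w = 0
    · exact Or.inl (by simp [hw0])
    · right
      have hwpos : 0 < ‖w‖ := norm_pos_iff.mpr hw0
      have hex : ∃ n : ℕ, (2:ℝ)⁻¹ ^ n ≤ ‖w‖ := by
        obtain ⟨n, hn⟩ := exists_pow_lt_of_lt_one hwpos (by norm_num : (2:ℝ)⁻¹ < 1)
        exact ⟨n, hn.le⟩
      classical
      set n₀ := Nat.find hex with hn₀
      have hspec : (2:ℝ)⁻¹ ^ n₀ ≤ ‖w‖ := Nat.find_spec hex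
      have hne : n₀ ≠ 0 := by
        intro h
        rw [h, pow_zero] at hspec
        linarith
      obtain ⟨m, hm⟩ : ∃ m, n₀ = m + 1 := ⟨n₀ - 1, (Nat.succ_pred_eq_of_pos (Nat.pos_of_ne_zero hne)).symm⟩
      have hmin : ¬ ((2:ℝ)⁻¹ ^ m ≤ ‖w‖) := Nat.find_min hex (by omega)
      push_neg at hmin
      refine mem_iUnion.mpr ⟨m, ?_, ?_⟩
      · rwa [mem_ball_zero_iff]
      · rw [mem_ball_zero_iff, not_lt, ← hm]; exact hspec
  have hmeas : ∀ n, MeasurableSet (B n) := fun n => measurableSet_ball.diff measurableSet_ball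
  set c : ℝ := (2:ℝ)⁻¹ ^ α with hc
  have hc0 : 0 < c := Real.rpow_pos_of_pos (by norm_num) _
  have hc1 : c < 1 := Real.rpow_lt_one (by norm_num) (by norm_num) hα
  have hup : ∀ n : ℕ, ∫⁻ w in B n, ENNReal.ofReal (‖w‖ ^ (α - 2)) ≤
      ENNReal.ofReal (4 * Real.pi) * ENNReal.ofReal c ^ n := by
    intro n
    have hb1 : (0:ℝ) < (2:ℝ)⁻¹ ^ (n+1) := by positivity
    have hb0 : (0:ℝ) < (2:ℝ)⁻¹ ^ n := by positivity
    have hptw : ∀ w ∈ B n, ENNReal.ofReal (‖w‖ ^ (α - 2)) ≤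
        ENNReal.ofReal (((2:ℝ)⁻¹ ^ n) ^ α * ((2:ℝ)⁻¹ ^ (n+1) : ℝ) ^ (-2:ℝ)) := by
      intro w hw
      obtain ⟨hw1, hw2⟩ := hw
      rw [mem_ball_zero_iff] at hw1
      rw [mem_ball_zero_iff, not_lt] at hw2
      have hwpos : 0 < ‖w‖ := lt_of_lt_of_le hb1 hw2
      apply ENNReal.ofReal_le_ofReal
      have hsplit : ‖w‖ ^ (α - 2) = ‖w‖ ^ α * ‖w‖ ^ (-2:ℝ) := by
        rw [← Real.rpow_add hwpos]
        congr 1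
      rw [hsplit]
      apply mul_le_mul
      · exact Real.rpow_le_rpow (norm_nonneg w) hw1.le hα.le
      · exact Real.rpow_le_rpow_of_nonpos hb1 hw2 (by norm_num)
      · positivity
      · positivity
    calc ∫⁻ w in B n, ENNReal.ofReal (‖w‖ ^ (α - 2))
        ≤ ∫⁻ _ in B n, ENNReal.ofReal (((2:ℝ)⁻¹ ^ n) ^ α * ((2:ℝ)⁻¹ ^ (n+1) : ℝ) ^ (-2:ℝ)) :=
          setLIntegral_mono' (hmeas n) hptw
      _ = ENNReal.ofReal (((2:ℝ)⁻¹ ^ n) ^ α * ((2:ℝ)⁻¹ ^ (n+1) : ℝ) ^ (-2:ℝ)) * volume (B n) :=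
          setLIntegral_const _ _
      _ ≤ ENNReal.ofReal (((2:ℝ)⁻¹ ^ n) ^ α * ((2:ℝ)⁻¹ ^ (n+1) : ℝ) ^ (-2:ℝ)) *
            volume (ball (0:ℂ) ((2:ℝ)⁻¹ ^ n)) := by
          gcongr
          exact diff_subset
      _ = ENNReal.ofReal (4 * Real.pi * c ^ n) := by
          have e1 : ((2:ℝ)⁻¹ ^ (n+1) : ℝ) ^ (-2:ℝ) = 4 / ((2:ℝ)⁻¹ ^ n)^2 := by
            rw [show (-2:ℝ) = -((2:ℕ):ℝ) by norm_num, Real.rpow_neg hb1.le, Real.rpow_natCast,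
              pow_succ]
            field_simp
            ring
          have e2 : ((2:ℝ)⁻¹ ^ n) ^ α = c ^ n := by
            rw [← Real.rpow_natCast (2:ℝ)⁻¹ n, ← Real.rpow_mul (by norm_num), mul_comm,
              Real.rpow_mul (by norm_num), Real.rpow_natCast]
          rw [Complex.volume_ball, ← NNReal.coe_real_pi, ← ENNReal.ofReal_coe_nnreal,
            NNReal.coe_real_pi, ← ENNReal.ofReal_pow hb0.le,
            ← ENNReal.ofReal_mul (by positivity), ← ENNReal.ofReal_mul (by positivity)]
          congr 1
          rw [e1, e2]
          have hb0' : ((2:ℝ)⁻¹ ^ n) ≠ 0 := ne_of_gt hb0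
          field_simp
      _ = ENNReal.ofReal (4 * Real.pi) * ENNReal.ofReal c ^ n := by
          rw [ENNReal.ofReal_mul (by positivity), ENNReal.ofReal_pow hc0.le]
  calc ∫⁻ w in ball (0:ℂ) 1, ENNReal.ofReal (‖w‖ ^ (α - 2))
      ≤ ∫⁻ w in ({0} ∪ ⋃ n, B n : Set ℂ), ENNReal.ofReal (‖w‖ ^ (α - 2)) :=
        lintegral_mono_set hcover
    _ ≤ (∫⁻ w in ({0} : Set ℂ), ENNReal.ofReal (‖w‖ ^ (α - 2)))
          + ∫⁻ w in (⋃ n, B n), ENNReal.ofReal (‖w‖ ^ (α - 2)) := lintegral_union_le _ _ _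
    _ = ∫⁻ w in (⋃ n, B n), ENNReal.ofReal (‖w‖ ^ (α - 2)) := by
        rw [setLIntegral_measure_zero _ _ (measure_singleton 0), zero_add]
    _ ≤ ∑' n, ∫⁻ w in B n, ENNReal.ofReal (‖w‖ ^ (α - 2)) := lintegral_iUnion_le _ _
    _ ≤ ∑' n : ℕ, ENNReal.ofReal (4 * Real.pi) * ENNReal.ofReal c ^ n :=
        ENNReal.tsum_le_tsum hup
    _ = ENNReal.ofReal (4 * Real.pi) * ∑' n : ℕ, ENNReal.ofReal c ^ n := ENNReal.tsum_mul_left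
    _ = ENNReal.ofReal (4 * Real.pi) * (1 - ENNReal.ofReal c)⁻¹ := by
        rw [ENNReal.tsum_geometric]
    _ < ⊤ := by
        apply ENNReal.mul_lt_top ENNReal.ofReal_lt_top
        rw [ENNReal.inv_lt_top]
        rw [tsub_pos_iff_lt]
        exact ENNReal.ofReal_lt_one.mpr hc1


lemma finite_tail {s : ℝ} (hs : s < -2) :
    ∫⁻ z : ℂ in (closedBall 0 1)ᶜ, ENNReal.ofReal (‖z‖ ^ s) < ⊤ := by
  have h2 : (Module.finrank ℝ ℂ : ℝ) < -s := by
    rw [Complex.finrank_real_complex]; norm_num; linarith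
  have hfin := finite_integral_one_add_norm (E := ℂ) (μ := volume) h2
  have hptw : ∀ z : ℂ, z ∈ (closedBall (0:ℂ) 1)ᶜ → ENNReal.ofReal (‖z‖ ^ s) ≤
      ENNReal.ofReal ((2:ℝ) ^ (-s)) * ENNReal.ofReal ((1 + ‖z‖) ^ (-(-s))) := by
    intro z hz
    rw [mem_compl_iff, mem_closedBall_zero_iff, not_le] at hz
    have hzpos : (0:ℝ) < ‖z‖ := lt_trans one_pos hz
    rw [← ENNReal.ofReal_mul (by positivity)]
    apply ENNReal.ofReal_le_ofReal
    rw [neg_neg]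
    have h1 : (2 * ‖z‖ : ℝ) ^ s ≤ (1 + ‖z‖) ^ s :=
      Real.rpow_le_rpow_of_nonpos (by positivity) (by linarith) (by linarith)
    have h2' : (2 * ‖z‖ : ℝ) ^ s = 2 ^ s * ‖z‖ ^ s := Real.mul_rpow (by norm_num) (norm_nonneg z)
    have h3 : (0:ℝ) < 2 ^ (-s) := Real.rpow_pos_of_pos (by norm_num) _
    have h4 : (2:ℝ) ^ (-s) * 2 ^ s = 1 := by
      rw [← Real.rpow_add (by norm_num)]; norm_num
    calc ‖z‖ ^ s = 2 ^ (-s) * (2 ^ s * ‖z‖ ^ s) := by rw [← mul_assoc, h4, one_mul]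
      _ = 2 ^ (-s) * (2 * ‖z‖) ^ s := by rw [h2']
      _ ≤ 2 ^ (-s) * (1 + ‖z‖) ^ s := by
          apply mul_le_mul_of_nonneg_left h1 h3.le
  calc ∫⁻ z : ℂ in (closedBall 0 1)ᶜ, ENNReal.ofReal (‖z‖ ^ s)
      ≤ ∫⁻ z : ℂ in (closedBall 0 1)ᶜ,
          ENNReal.ofReal ((2:ℝ) ^ (-s)) * ENNReal.ofReal ((1 + ‖z‖) ^ (-(-s))) :=
        setLIntegral_mono' measurableSet_closedBall.compl hptw
    _ = ENNReal.ofReal ((2:ℝ) ^ (-s)) *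
          ∫⁻ z : ℂ in (closedBall 0 1)ᶜ, ENNReal.ofReal ((1 + ‖z‖) ^ (-(-s))) :=
        lintegral_const_mul' _ _ ENNReal.ofReal_ne_top
    _ ≤ ENNReal.ofReal ((2:ℝ) ^ (-s)) * ∫⁻ z : ℂ, ENNReal.ofReal ((1 + ‖z‖) ^ (-(-s))) := by
        gcongr
        exact Measure.restrict_le_self
    _ < ⊤ := ENNReal.mul_lt_top ENNReal.ofReal_lt_top hfin


set_option maxHeartbeats 1000000 in
private lemma rho_key (α : ℝ) (hα : 0 < α) (ρ : ℂ → ℝ) (hρpos : ∀ z, 0 < ρ z)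
    (hρ : ∀ z : ℂ,
      (volume.withDensity (fun w : ℂ => ENNReal.ofReal (α ^ 2 * ‖w‖ ^ (α - 2))))
        (ball z (ρ z)) = 1)
    (γ : ℝ) (hγ : 0 < γ) :
    (∫⁻ z : ℂ, ENNReal.ofReal (ρ z ^ (-γ))) < ⊤ ↔ α < 2 - 4 / γ := by
  set ν := volume.withDensity (fun w : ℂ => ENNReal.ofReal (α ^ 2 * ‖w‖ ^ (α - 2)))
    with hνdef
  set m₁ : ℝ := min ((2:ℝ)⁻¹ ^ (α-2)) ((3/2:ℝ) ^ (α-2)) with hm₁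
  set m₂ : ℝ := max ((2:ℝ)⁻¹ ^ (α-2)) ((3/2:ℝ) ^ (α-2)) with hm₂
  have hm₁pos : 0 < m₁ :=
    lt_min (Real.rpow_pos_of_pos (by norm_num) _) (Real.rpow_pos_of_pos (by norm_num) _)
  have hm₂pos : 0 < m₂ := lt_of_lt_of_le hm₁pos min_le_max
  have hdens : ∀ z w : ℂ, z ≠ 0 → dist w z ≤ ‖z‖/2 →
      m₁ * ‖z‖ ^ (α-2) ≤ ‖w‖ ^ (α-2) ∧ ‖w‖ ^ (α-2) ≤ m₂ * ‖z‖ ^ (α-2) := by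
    intro z w hz hd
    have hz' : 0 < ‖z‖ := norm_pos_iff.mpr hz
    have hd1 : ‖z‖ - ‖w‖ ≤ ‖z‖/2 := by
      refine le_trans (le_trans (norm_sub_norm_le z w) ?_) le_rfl
      rw [← dist_eq_norm, dist_comm]; exact hd
    have hd2 : ‖w‖ - ‖z‖ ≤ ‖z‖/2 := by
      refine le_trans (le_trans (norm_sub_norm_le w z) ?_) le_rfl
      rw [← dist_eq_norm]; exact hd
    have hw1 : (2:ℝ)⁻¹ * ‖z‖ ≤ ‖w‖ := by linarith
    have hw2 : ‖w‖ ≤ (3/2:ℝ) * ‖z‖ := by linarith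
    have hwpos : 0 < ‖w‖ := lt_of_lt_of_le (by positivity) hw1
    rcases le_or_gt 2 α with h2 | h2
    · constructor
      · calc m₁ * ‖z‖^(α-2) ≤ (2:ℝ)⁻¹ ^ (α-2) * ‖z‖^(α-2) :=
              mul_le_mul_of_nonneg_right (min_le_left _ _) (Real.rpow_nonneg hz'.le _)
          _ = ((2:ℝ)⁻¹ * ‖z‖) ^ (α-2) := (Real.mul_rpow (by norm_num) hz'.le).symm
          _ ≤ ‖w‖^(α-2) := Real.rpow_le_rpow (by positivity) hw1 (by linarith)
      · calc ‖w‖^(α-2) ≤ ((3/2:ℝ) * ‖z‖)^(α-2) := Real.rpow_le_rpow hwpos.le hw2 (by linarith)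
          _ = (3/2:ℝ)^(α-2) * ‖z‖^(α-2) := Real.mul_rpow (by norm_num) hz'.le
          _ ≤ m₂ * ‖z‖^(α-2) :=
              mul_le_mul_of_nonneg_right (le_max_right _ _) (Real.rpow_nonneg hz'.le _)
    · constructor
      · calc m₁ * ‖z‖^(α-2) ≤ (3/2:ℝ)^(α-2) * ‖z‖^(α-2) :=
              mul_le_mul_of_nonneg_right (min_le_right _ _) (Real.rpow_nonneg hz'.le _)
          _ = ((3/2:ℝ) * ‖z‖)^(α-2) := (Real.mul_rpow (by norm_num) hz'.le).symm
          _ ≤ ‖w‖^(α-2) := Real.rpow_le_rpow_of_nonpos hwpos hw2 (by linarith)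
      · calc ‖w‖^(α-2) ≤ ((2:ℝ)⁻¹*‖z‖)^(α-2) :=
              Real.rpow_le_rpow_of_nonpos (by positivity) hw1 (by linarith)
          _ = (2:ℝ)⁻¹^(α-2) * ‖z‖^(α-2) := Real.mul_rpow (by norm_num) hz'.le
          _ ≤ m₂ * ‖z‖^(α-2) :=
              mul_le_mul_of_nonneg_right (le_max_left _ _) (Real.rpow_nonneg hz'.le _)
  set Klo : ℝ := Real.pi * (α^2 * m₁) with hKlo
  set Khi : ℝ := Real.pi * (α^2 * m₂) with hKhi
  have hKlopos : 0 < Klo := by positivity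
  have hKhipos : 0 < Khi := by positivity
  have hEball : ∀ z : ℂ, ∀ r : ℝ, z ≠ 0 → 0 < r → r ≤ ‖z‖/2 →
      ENNReal.ofReal (Klo * r^2 * ‖z‖^(α-2)) ≤ ν (ball z r) ∧
      ν (ball z r) ≤ ENNReal.ofReal (Khi * r^2 * ‖z‖^(α-2)) := by
    intro z r hz hr hr2
    have hz' : 0 < ‖z‖ := norm_pos_iff.mpr hz
    have hb : ∀ w : ℂ, w ∈ ball z r → dist w z ≤ ‖z‖/2 := fun w hw =>
      le_trans (le_of_lt (mem_ball.mp hw)) hr2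
    rw [hνdef, withDensity_apply _ measurableSet_ball]
    have hvol : volume (ball z r) = ENNReal.ofReal (r^2 * Real.pi) := by
      rw [Complex.volume_ball, ← NNReal.coe_real_pi, ← ENNReal.ofReal_coe_nnreal,
        NNReal.coe_real_pi, ← ENNReal.ofReal_pow hr.le, ← ENNReal.ofReal_mul (by positivity)]
    constructor
    · calc ENNReal.ofReal (Klo * r^2 * ‖z‖^(α-2))
          = ENNReal.ofReal (α^2 * (m₁ * ‖z‖^(α-2))) * volume (ball z r) := by
            rw [hvol, ← ENNReal.ofReal_mul (by positivity)]
            congr 1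
            rw [hKlo]; ring
        _ = ∫⁻ _ in ball z r, ENNReal.ofReal (α^2 * (m₁ * ‖z‖^(α-2))) :=
            (setLIntegral_const _ _).symm
        _ ≤ ∫⁻ w in ball z r, ENNReal.ofReal (α ^ 2 * ‖w‖ ^ (α - 2)) := by
            apply setLIntegral_mono' measurableSet_ball
            intro w hw
            apply ENNReal.ofReal_le_ofReal
            exact mul_le_mul_of_nonneg_left ((hdens z w hz (hb w hw)).1) (sq_nonneg α)
    · calc ∫⁻ w in ball z r, ENNReal.ofReal (α ^ 2 * ‖w‖ ^ (α - 2))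
          ≤ ∫⁻ _ in ball z r, ENNReal.ofReal (α^2 * (m₂ * ‖z‖^(α-2))) := by
            apply setLIntegral_mono' measurableSet_ball
            intro w hw
            apply ENNReal.ofReal_le_ofReal
            exact mul_le_mul_of_nonneg_left ((hdens z w hz (hb w hw)).2) (sq_nonneg α)
        _ = ENNReal.ofReal (α^2 * (m₂ * ‖z‖^(α-2))) * volume (ball z r) :=
            setLIntegral_const _ _
        _ = ENNReal.ofReal (Khi * r^2 * ‖z‖^(α-2)) := by
            rw [hvol, ← ENNReal.ofReal_mul (by positivity)]
            congr 1
            rw [hKhi]; ring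
  -- scaling exponent
  set e : ℝ := (2 - α)/2 with he
  set C1 : ℝ := Real.sqrt Khi⁻¹ with hC1
  set C2 : ℝ := Real.sqrt Klo⁻¹ with hC2
  have hC1pos : 0 < C1 := Real.sqrt_pos.mpr (inv_pos.mpr hKhipos)
  have hC2pos : 0 < C2 := Real.sqrt_pos.mpr (inv_pos.mpr hKlopos)
  have hsqrt : ∀ K : ℝ, 0 < K → ∀ z : ℂ, z ≠ 0 →
      Real.sqrt (K⁻¹ * ‖z‖^(2-α)) = Real.sqrt K⁻¹ * ‖z‖^e := by
    intro K hK z hz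
    have hz' : 0 < ‖z‖ := norm_pos_iff.mpr hz
    rw [Real.sqrt_mul (by positivity), Real.sqrt_eq_rpow (‖z‖^(2-α)), ← Real.rpow_mul hz'.le]
    congr 1
    rw [he]; ring_nf
  have hup : ∀ z : ℂ, z ≠ 0 → min (ρ z) (‖z‖/2) ≤ C2 * ‖z‖^e := by
    intro z hz
    have hz' : 0 < ‖z‖ := norm_pos_iff.mpr hz
    set r := min (ρ z) (‖z‖/2) with hr
    have hr0 : 0 < r := lt_min (hρpos z) (by positivity)
    have hr2 : r ≤ ‖z‖/2 := min_le_right _ _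
    have h1 : ν (ball z r) ≤ 1 := by
      rw [← hρ z]; exact measure_mono (ball_subset_ball (min_le_left _ _))
    have h3 : ENNReal.ofReal (Klo * r^2 * ‖z‖^(α-2)) ≤ 1 :=
      le_trans (hEball z r hz hr0 hr2).1 h1
    rw [ENNReal.ofReal_le_one] at h3
    set t := ‖z‖^(α-2) with ht'
    have ht : 0 < t := Real.rpow_pos_of_pos hz' _
    have htt : ‖z‖^(2-α) * t = 1 := by
      rw [ht', ← Real.rpow_add hz']; norm_num
    have h4 : r^2 ≤ Klo⁻¹ * ‖z‖^(2-α) := by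
      have hKt : 0 < Klo * t := by positivity
      rw [← mul_le_mul_iff_right₀ hKt]
      have haux : Klo * t * (Klo⁻¹ * ‖z‖^(2-α)) = ‖z‖^(2-α) * t := by
        field_simp
      calc Klo * t * r^2 = Klo * r^2 * t := by ring
       _ ≤ 1 := h3
       _ = Klo * t * (Klo⁻¹ * ‖z‖^(2-α)) := by rw [haux, htt]
    have h5 : r ≤ Real.sqrt (Klo⁻¹ * ‖z‖^(2-α)) := Real.le_sqrt_of_sq_le h4
    rwa [hsqrt Klo hKlopos z hz] at h5
  have hlo : ∀ z : ℂ, z ≠ 0 → ρ z ≤ ‖z‖/2 → C1 * ‖z‖^e ≤ ρ z := by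
    intro z hz hhalf
    have hz' : 0 < ‖z‖ := norm_pos_iff.mpr hz
    have h1 : (1:ℝ≥0∞) ≤ ENNReal.ofReal (Khi * ρ z^2 * ‖z‖^(α-2)) := by
      rw [← hρ z]; exact (hEball z (ρ z) hz (hρpos z) hhalf).2
    rw [ENNReal.one_le_ofReal] at h1
    set t := ‖z‖^(α-2) with ht'
    have ht : 0 < t := Real.rpow_pos_of_pos hz' _
    have htt : ‖z‖^(2-α) * t = 1 := by
      rw [ht', ← Real.rpow_add hz']; norm_num
    have h4 : Khi⁻¹ * ‖z‖^(2-α) ≤ ρ z^2 := by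
      have hKt : 0 < Khi * t := by positivity
      rw [← mul_le_mul_iff_right₀ hKt]
      have haux : Khi * t * (Khi⁻¹ * ‖z‖^(2-α)) = ‖z‖^(2-α) * t := by
        field_simp
      calc Khi * t * (Khi⁻¹ * ‖z‖^(2-α)) = ‖z‖^(2-α) * t := haux
       _ = 1 := htt
       _ ≤ Khi * ρ z^2 * t := h1
       _ = Khi * t * ρ z^2 := by ring
    have h5 : Real.sqrt (Khi⁻¹ * ‖z‖^(2-α)) ≤ ρ z := by
      calc Real.sqrt (Khi⁻¹ * ‖z‖^(2-α)) ≤ Real.sqrt (ρ z^2) := Real.sqrt_le_sqrt h4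
        _ = ρ z := Real.sqrt_sq (hρpos z).le
    rwa [hsqrt Khi hKhipos z hz] at h5
  set R0 : ℝ := max 1 ((2*C2+1) ^ ((2:ℝ)/α)) with hR0
  have hR0one : (1:ℝ) ≤ R0 := le_max_left _ _
  have hR0pos : (0:ℝ) < R0 := lt_of_lt_of_le one_pos hR0one
  have hR0' : ∀ z : ℂ, R0 ≤ ‖z‖ → 2*C2 < ‖z‖^(α/2) := by
    intro z hz
    have h1 : (2*C2+1) ^ ((2:ℝ)/α) ≤ ‖z‖ := le_trans (le_max_right _ _) hz
    have hmul : (2:ℝ)/α * (α/2) = 1 := by field_simp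
    calc 2*C2 < 2*C2+1 := by linarith
      _ = ((2*C2+1) ^ ((2:ℝ)/α)) ^ (α/2) := by
          rw [← Real.rpow_mul (by positivity), hmul, Real.rpow_one]
      _ ≤ ‖z‖^(α/2) := Real.rpow_le_rpow (by positivity) h1 (by positivity)
  have htail : ∀ z : ℂ, R0 ≤ ‖z‖ → ρ z ≤ C2 * ‖z‖^e ∧ C1 * ‖z‖^e ≤ ρ z := by
    intro z hz
    have hz' : 0 < ‖z‖ := lt_of_lt_of_le hR0pos hz
    have hz0 : z ≠ 0 := norm_pos_iff.mp hz'
    have hmin := hup z hz0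
    have hepos : 0 < ‖z‖^e := Real.rpow_pos_of_pos hz' _
    have hsplit : ‖z‖^(α/2) * ‖z‖^e = ‖z‖ := by
      rw [he, ← Real.rpow_add hz', show α/2 + (2-α)/2 = 1 by ring, Real.rpow_one]
    have h2 := hR0' z hz
    have hhalf : ρ z ≤ ‖z‖/2 := by
      by_contra hcon
      push_neg at hcon
      have hm : ‖z‖/2 ≤ C2 * ‖z‖^e := by rwa [min_eq_right hcon.le] at hmin
      nlinarith [mul_lt_mul_of_pos_right h2 hepos]
    exact ⟨by rwa [min_eq_left hhalf] at hmin, hlo z hz0 hhalf⟩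
  -- lower bound near the origin
  have hνfin : ν (ball (0:ℂ) 1) ≠ ⊤ := by
    rw [hνdef, withDensity_apply _ measurableSet_ball]
    have : ∫⁻ w in ball (0:ℂ) 1, ENNReal.ofReal (α ^ 2 * ‖w‖ ^ (α - 2))
        = ENNReal.ofReal (α^2) * ∫⁻ w in ball (0:ℂ) 1, ENNReal.ofReal (‖w‖ ^ (α - 2)) := by
      rw [← lintegral_const_mul' _ _ ENNReal.ofReal_ne_top]
      congr 1
      ext w
      rw [← ENNReal.ofReal_mul (sq_nonneg α)]
    rw [this]
    exact (ENNReal.mul_lt_top ENNReal.ofReal_lt_top (finite_near_zero hα)).ne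
  have hI : ⋂ n : ℕ, ball (0:ℂ) (1/((n:ℝ)+1)) = {0} := by
    ext z
    simp only [mem_iInter, mem_ball_zero_iff, mem_singleton_iff]
    constructor
    · intro h
      by_contra hz
      have hz' : 0 < ‖z‖ := norm_pos_iff.mpr hz
      obtain ⟨n, hn⟩ := exists_nat_one_div_lt hz'
      exact absurd (h n) (not_lt.mpr hn.le)
    · intro h
      subst h
      intro n
      simp only [norm_zero]
      positivity
  have hν0 : ν ({0} : Set ℂ) = 0 := by
    rw [hνdef, withDensity_apply _ (measurableSet_singleton 0),
      setLIntegral_measure_zero _ _ (measure_singleton 0)]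
  have htend : Filter.Tendsto (fun n : ℕ => ν (ball (0:ℂ) (1/((n:ℝ)+1)))) Filter.atTop (nhds 0) := by
    have h := tendsto_measure_iInter_atTop (μ := ν)
      (s := fun n : ℕ => ball (0:ℂ) (1/((n:ℝ)+1)))
      (fun n => measurableSet_ball.nullMeasurableSet)
      (fun m n hmn => ball_subset_ball (by
        apply one_div_le_one_div_of_le (by positivity)
        linarith [(Nat.cast_le (α := ℝ)).mpr hmn]))
      ⟨0, by simpa using hνfin⟩
    rw [hI, hν0] at h
    exact h
  obtain ⟨n, hn⟩ := (htend.eventually_lt_const (zero_lt_one (α := ℝ≥0∞))).exists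
  set δ2 : ℝ := 1/((n:ℝ)+1) with hδ2def
  have hδ2 : 0 < δ2 := by positivity
  have hsmall : ∀ z : ℂ, ‖z‖ ≤ δ2/2 → δ2/2 ≤ ρ z := by
    intro z hz
    by_contra h
    push_neg at h
    have hsub : ball z (ρ z) ⊆ ball (0:ℂ) δ2 := by
      intro w hw
      rw [mem_ball, dist_eq_norm] at hw
      rw [mem_ball_zero_iff]
      have h1 : ‖w‖ - ‖z‖ ≤ ‖w - z‖ := norm_sub_norm_le w z
      linarith
    have hle : (1:ℝ≥0∞) ≤ ν (ball (0:ℂ) δ2) := by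
      rw [← hρ z]; exact measure_mono hsub
    exact absurd (lt_of_le_of_lt hle hn) (lt_irrefl _)
  set c0 : ℝ := min (δ2/4) (C1 * min ((δ2/2)^e) (R0^e)) with hc0def
  have hminpos : 0 < min ((δ2/2)^e) (R0^e) :=
    lt_min (Real.rpow_pos_of_pos (by positivity) _) (Real.rpow_pos_of_pos hR0pos _)
  have hc0pos : 0 < c0 := lt_min (by positivity) (by positivity)
  have hnear : ∀ z : ℂ, ‖z‖ ≤ R0 → c0 ≤ ρ z := by
    intro z hz
    rcases le_or_gt (‖z‖) (δ2/2) with hcase | hcase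
    · calc c0 ≤ δ2/4 := min_le_left _ _
        _ ≤ δ2/2 := by linarith
        _ ≤ ρ z := hsmall z hcase
    · have hz' : 0 < ‖z‖ := lt_trans (by positivity) hcase
      have hz0 : z ≠ 0 := norm_pos_iff.mp hz'
      rcases le_or_gt (ρ z) (‖z‖/2) with hhalf | hhalf
      · have h1 := hlo z hz0 hhalf
        have h2 : min ((δ2/2)^e) (R0^e) ≤ ‖z‖^e := by
          rcases le_or_gt 0 e with he0 | he0
          · exact le_trans (min_le_left _ _) (Real.rpow_le_rpow (by positivity) hcase.le he0)
          · exact le_trans (min_le_right _ _)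
              (Real.rpow_le_rpow_of_nonpos hz' hz he0.le)
        calc c0 ≤ C1 * min ((δ2/2)^e) (R0^e) := min_le_right _ _
          _ ≤ C1 * ‖z‖^e := mul_le_mul_of_nonneg_left h2 hC1pos.le
          _ ≤ ρ z := h1
      · calc c0 ≤ δ2/4 := min_le_left _ _
          _ ≤ ρ z := by linarith
  -- final
  set s : ℝ := γ*(α-2)/2 with hsdef
  have hes : e * (-γ) = s := by rw [he, hsdef]; ring
  have hs_iff : α < 2 - 4/γ ↔ s < -2 := by
    have hγ4 : γ * (4/γ) = 4 := by field_simp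
    rw [hsdef]
    constructor
    · intro h; nlinarith
    · intro h; nlinarith
  constructor
  · intro hfin
    by_contra hcon
    push_neg at hcon
    have hs2 : -2 ≤ s := by
      rcases lt_or_ge s (-2) with h | h
      · exact absurd (hs_iff.mpr h) (not_lt.mpr hcon)
      · exact h
    have hptw : ∀ z : ℂ, z ∈ (closedBall (0:ℂ) R0)ᶜ →
        ENNReal.ofReal (C2 ^ (-γ) * R0 ^ (s+2)) * ENNReal.ofReal (‖z‖ ^ (-2:ℝ)) ≤
        ENNReal.ofReal (ρ z ^ (-γ)) := by
      intro z hz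
      rw [mem_compl_iff, mem_closedBall_zero_iff, not_le] at hz
      have hz1 : R0 ≤ ‖z‖ := hz.le
      have hz' : 0 < ‖z‖ := lt_of_lt_of_le hR0pos hz1
      have hz0 : z ≠ 0 := norm_pos_iff.mp hz'
      have hρle := (htail z hz1).1
      rw [← ENNReal.ofReal_mul (by positivity)]
      apply ENNReal.ofReal_le_ofReal
      have h1 : (C2 * ‖z‖^e) ^ (-γ) ≤ ρ z ^ (-γ) :=
        Real.rpow_le_rpow_of_nonpos (hρpos z) hρle (neg_nonpos.mpr hγ.le)
      have h2 : (C2 * ‖z‖^e) ^ (-γ) = C2 ^ (-γ) * ‖z‖ ^ s := by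
        rw [Real.mul_rpow hC2pos.le (Real.rpow_pos_of_pos hz' _).le,
          ← Real.rpow_mul (norm_nonneg z), hes]
      have h3 : R0 ^ (s+2) * ‖z‖ ^ (-2:ℝ) ≤ ‖z‖ ^ s := by
        have h4 : ‖z‖ ^ s = ‖z‖^(s+2) * ‖z‖ ^ (-2:ℝ) := by
          rw [← Real.rpow_add hz']; congr 1; ring
        rw [h4]
        apply mul_le_mul_of_nonneg_right
          (Real.rpow_le_rpow hR0pos.le hz1 (by linarith)) (Real.rpow_nonneg (norm_nonneg z) _)
      calc C2 ^ (-γ) * R0 ^ (s+2) * ‖z‖ ^ (-2:ℝ)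
          = C2 ^ (-γ) * (R0 ^ (s+2) * ‖z‖ ^ (-2:ℝ)) := by ring
        _ ≤ C2 ^ (-γ) * ‖z‖ ^ s :=
            mul_le_mul_of_nonneg_left h3 (Real.rpow_nonneg hC2pos.le _)
        _ = (C2 * ‖z‖^e) ^ (-γ) := h2.symm
        _ ≤ ρ z ^ (-γ) := h1
    have hinf : (⊤:ℝ≥0∞) ≤ ∫⁻ z : ℂ, ENNReal.ofReal (ρ z ^ (-γ)) := by
      calc (⊤:ℝ≥0∞) = ENNReal.ofReal (C2 ^ (-γ) * R0 ^ (s+2)) *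
            ∫⁻ z : ℂ in (closedBall 0 R0)ᶜ, ENNReal.ofReal (‖z‖ ^ (-2:ℝ)) := by
            rw [lintegral_inv_sq_top hR0pos, ENNReal.mul_top]
            simp only [ne_eq, ENNReal.ofReal_eq_zero, not_le]
            positivity
        _ = ∫⁻ z : ℂ in (closedBall 0 R0)ᶜ,
              ENNReal.ofReal (C2 ^ (-γ) * R0 ^ (s+2)) * ENNReal.ofReal (‖z‖ ^ (-2:ℝ)) :=
            (lintegral_const_mul' _ _ ENNReal.ofReal_ne_top).symm
        _ ≤ ∫⁻ z : ℂ in (closedBall 0 R0)ᶜ, ENNReal.ofReal (ρ z ^ (-γ)) :=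
            setLIntegral_mono' measurableSet_closedBall.compl hptw
        _ ≤ ∫⁻ z : ℂ, ENNReal.ofReal (ρ z ^ (-γ)) := setLIntegral_le_lintegral _ _
    exact absurd (top_le_iff.mp hinf) hfin.ne
  · intro hcond
    have hs : s < -2 := hs_iff.mp hcond
    rw [← lintegral_add_compl (fun z : ℂ => ENNReal.ofReal (ρ z ^ (-γ)))
      (measurableSet_closedBall : MeasurableSet (closedBall (0:ℂ) R0))]
    apply ENNReal.add_lt_top.mpr
    constructor
    · calc ∫⁻ z : ℂ in closedBall 0 R0, ENNReal.ofReal (ρ z ^ (-γ))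
          ≤ ∫⁻ _ in closedBall (0:ℂ) R0, ENNReal.ofReal (c0 ^ (-γ)) := by
            apply setLIntegral_mono' measurableSet_closedBall
            intro z hz
            apply ENNReal.ofReal_le_ofReal
            exact Real.rpow_le_rpow_of_nonpos hc0pos
              (hnear z (mem_closedBall_zero_iff.mp hz)) (neg_nonpos.mpr hγ.le)
        _ = ENNReal.ofReal (c0 ^ (-γ)) * volume (closedBall (0:ℂ) R0) :=
            setLIntegral_const _ _
        _ < ⊤ := ENNReal.mul_lt_top ENNReal.ofReal_lt_top measure_closedBall_lt_top
    · have hptw : ∀ z : ℂ, z ∈ (closedBall (0:ℂ) R0)ᶜ →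
          ENNReal.ofReal (ρ z ^ (-γ)) ≤
          ENNReal.ofReal (C1 ^ (-γ)) * ENNReal.ofReal (‖z‖ ^ s) := by
        intro z hz
        rw [mem_compl_iff, mem_closedBall_zero_iff, not_le] at hz
        have hz1 : R0 ≤ ‖z‖ := hz.le
        have hz' : 0 < ‖z‖ := lt_of_lt_of_le hR0pos hz1
        have hρge := (htail z hz1).2
        rw [← ENNReal.ofReal_mul (Real.rpow_nonneg hC1pos.le _)]
        apply ENNReal.ofReal_le_ofReal
        have h1 : ρ z ^ (-γ) ≤ (C1 * ‖z‖^e) ^ (-γ) :=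
          Real.rpow_le_rpow_of_nonpos (by positivity) hρge (neg_nonpos.mpr hγ.le)
        have h2 : (C1 * ‖z‖^e) ^ (-γ) = C1 ^ (-γ) * ‖z‖ ^ s := by
          rw [Real.mul_rpow hC1pos.le (Real.rpow_pos_of_pos hz' _).le,
            ← Real.rpow_mul (norm_nonneg z), hes]
        rw [← h2]; exact h1
      calc ∫⁻ z : ℂ in (closedBall (0:ℂ) R0)ᶜ, ENNReal.ofReal (ρ z ^ (-γ))
          ≤ ∫⁻ z : ℂ in (closedBall (0:ℂ) R0)ᶜ,
              ENNReal.ofReal (C1 ^ (-γ)) * ENNReal.ofReal (‖z‖ ^ s) :=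
            setLIntegral_mono' measurableSet_closedBall.compl hptw
        _ = ENNReal.ofReal (C1 ^ (-γ)) *
              ∫⁻ z : ℂ in (closedBall (0:ℂ) R0)ᶜ, ENNReal.ofReal (‖z‖ ^ s) := by
            exact lintegral_const_mul' _ _ ENNReal.ofReal_ne_top
        _ ≤ ENNReal.ofReal (C1 ^ (-γ)) *
              ∫⁻ z : ℂ in (closedBall (0:ℂ) 1)ᶜ, ENNReal.ofReal (‖z‖ ^ s) := by
            gcongr
        _ < ⊤ := ENNReal.mul_lt_top ENNReal.ofReal_lt_top (finite_tail hs)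

/-- Integrability criterion for negative powers of the regularized radius `ρ` of the
canonical weight `φ_α(z) = |z|^α`: for every `γ > 0`, `∫_ℂ ρ(z)^(-γ) dm(z) < ∞` iff
`α < 2 − 4/γ`; in particular `∫ ρ^{-6} dm < ∞ ↔ α < 4/3` and `∫ ρ^{-4} dm < ∞ ↔ α < 1`. -/
theorem rho_alpha_integrability (α : ℝ) (hα : 0 < α)
    (ρ : ℂ → ℝ) (hρpos : ∀ z, 0 < ρ z)
    (hρ : ∀ z : ℂ,
      (volume.withDensity
          (fun w : ℂ => ENNReal.ofReal (α ^ 2 * ‖w‖ ^ (α - 2))))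
          (ball z (ρ z)) = 1) :
    (∀ γ : ℝ, 0 < γ →
        ((∫⁻ z : ℂ, ENNReal.ofReal (ρ z ^ (-γ))) < ⊤ ↔ α < 2 - 4 / γ))
      ∧ ((∫⁻ z : ℂ, ENNReal.ofReal (ρ z ^ (-(6 : ℝ)))) < ⊤ ↔ α < 4 / 3)
      ∧ ((∫⁻ z : ℂ, ENNReal.ofReal (ρ z ^ (-(4 : ℝ)))) < ⊤ ↔ α < 1) := by
  refine ⟨fun γ hγ => rho_key α hα ρ hρpos hρ γ hγ, ?_, ?_⟩
  · have h := rho_key α hα ρ hρpos hρ 6 (by norm_num)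
    rwa [show (2:ℝ) - 4/6 = 4/3 by norm_num] at h
  · have h := rho_key α hα ρ hρpos hρ 4 (by norm_num)
    rwa [show (2:ℝ) - 4/4 = 1 by norm_num] at h
end

section
/- Let ρ : ℂ → ℝ be a positive function satisfying |ρ(z) − ρ(ζ)| ≤ |z − ζ| for all z, ζ ∈ ℂ, and assume ρ(z) → +∞ as z → ∞ (along the cocompact filter of ℂ). For integers n ≥ 1 and 1 ≤ k ≤ n set z_{n,k} = (n − 1/2) · exp(2πi (k − 1/2)/n). Then for every γ > 0, the double series Σ_{n=1}^∞ Σ_{k=1}^n ρ(z_{n,k})^{−γ} converges if and only if ∫_ℂ ρ(z)^{−γ} dm(z) < ∞, where m is Lebesgue area measure on ℂ. -/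
open MeasureTheory Filter Metric

noncomputable def pAng (n k : ℕ) : ℝ := 2 * Real.pi * ((k : ℝ) - 1/2) / n

noncomputable def pctr (n k : ℕ) : ℂ :=
  (((n : ℝ) - 1/2 : ℝ) : ℂ) * Complex.exp ((pAng n k : ℂ) * Complex.I)

lemma pctr_eq (n k : ℕ) :
    pctr n k = (((n : ℝ) - 1/2 : ℝ) : ℂ) *
      Complex.exp (((2 * Real.pi : ℝ) : ℂ) * Complex.I * (((k : ℂ) - 1/2) / (n : ℂ))) := by
  unfold pctr pAng
  congr 2
  push_cast
  ring

lemma abs_pctr (n k : ℕ) (hn : 1 ≤ n) : ‖pctr n k‖ = (n : ℝ) - 1/2 := by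
  unfold pctr
  rw [norm_mul, Complex.norm_exp_ofReal_mul_I, mul_one, Complex.norm_real, Real.norm_eq_abs, abs_of_nonneg]
  have : (1:ℝ) ≤ n := by exact_mod_cast hn
  linarith

lemma exp_mul_I_sub (d : ℝ) :
    Complex.exp ((d : ℂ) * Complex.I) - Complex.exp (((-d : ℝ) : ℂ) * Complex.I)
      = 2 * (Real.sin d : ℂ) * Complex.I := by
  rw [Complex.exp_mul_I, Complex.exp_mul_I]
  push_cast
  rw [Complex.cos_neg, Complex.sin_neg]
  ring

lemma abs_exp_sub_exp (a b : ℝ) :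
    ‖Complex.exp ((a:ℂ) * Complex.I) - Complex.exp ((b:ℂ) * Complex.I)‖
      = 2 * |Real.sin ((a - b)/2)| := by
  have e1 : (a:ℂ) * Complex.I = (((a+b)/2 :ℝ):ℂ) * Complex.I + (((a-b)/2:ℝ):ℂ) * Complex.I := by
    push_cast; ring
  have e2 : (b:ℂ) * Complex.I = (((a+b)/2 :ℝ):ℂ) * Complex.I + ((-((a-b)/2):ℝ):ℂ) * Complex.I := by
    push_cast; ring
  rw [e1, e2, Complex.exp_add, Complex.exp_add, ← mul_sub, exp_mul_I_sub, norm_mul,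
    Complex.norm_exp_ofReal_mul_I, one_mul, norm_mul, norm_mul, Complex.norm_I, Complex.norm_real, Real.norm_eq_abs,
    Complex.norm_two, mul_one]

lemma abs_sin_le_self {x : ℝ} (hx : 0 ≤ x) : |Real.sin x| ≤ x := by
  rcases le_or_gt x 1 with h1 | h1
  · have hs : 0 ≤ Real.sin x :=
      Real.sin_nonneg_of_nonneg_of_le_pi hx (le_trans h1 (by linarith [Real.pi_gt_three]))
    rw [abs_of_nonneg hs]
    rcases eq_or_lt_of_le hx with rfl | h
    · simp
    · exact (Real.sin_lt h).le
  · exact le_trans (abs_le.2 ⟨Real.neg_one_le_sin x, Real.sin_le_one x⟩) h1.le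

lemma abs_sin_le_abs (x : ℝ) : |Real.sin x| ≤ |x| := by
  rcases le_or_gt 0 x with hx | hx
  · rw [abs_of_nonneg hx]; exact abs_sin_le_self hx
  · rw [abs_of_neg hx, ← abs_neg (Real.sin x), ← Real.sin_neg]
    exact abs_sin_le_self (by linarith)

lemma sin_ge {n d : ℕ} (hn : 1 ≤ n) (hd1 : 1 ≤ d) (hdn : d < n) :
    2 / (n:ℝ) ≤ Real.sin (Real.pi * d / n) := by
  have hπ := Real.pi_pos
  have hn0 : (0:ℝ) < n := by exact_mod_cast hn
  have hd0 : (1:ℝ) ≤ d := by exact_mod_cast hd1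
  have hdn' : (d:ℝ) ≤ (n:ℝ) - 1 := by
    have : (d:ℝ) + 1 ≤ n := by exact_mod_cast hdn
    linarith
  rcases le_or_gt (Real.pi * d / n) (Real.pi / 2) with h | h
  · have h0 : 0 ≤ Real.pi * d / n := by positivity
    refine le_trans ?_ (Real.mul_le_sin h0 h)
    rw [show 2 / Real.pi * (Real.pi * d / n) = 2 * d / n by field_simp]
    gcongr
    linarith
  · have he : Real.pi * d / n = Real.pi - Real.pi * ((n:ℝ) - d) / n := by
      field_simp; ring
    rw [he, Real.sin_pi_sub]
    have h0 : 0 ≤ Real.pi * ((n:ℝ) - d) / n := by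
      have hnd : (0:ℝ) ≤ (n:ℝ) - d := by linarith
      exact div_nonneg (mul_nonneg hπ.le hnd) hn0.le
    have h2 : Real.pi * ((n:ℝ) - d) / n ≤ Real.pi / 2 := by
      rw [he] at h; linarith
    refine le_trans ?_ (Real.mul_le_sin h0 h2)
    rw [show 2 / Real.pi * (Real.pi * ((n:ℝ) - d) / n) = 2 * ((n:ℝ) - d) / n by field_simp]
    gcongr
    linarith

lemma pctr_sep_same {n k₁ k₂ : ℕ} (hn : 1 ≤ n) (hk₂ : 1 ≤ k₂) (hlt : k₂ < k₁) (hk₁' : k₁ ≤ n) :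
    (1:ℝ) ≤ ‖pctr n k₁ - pctr n k₂‖ := by
  have hn0 : (0:ℝ) < n := by exact_mod_cast hn
  have hn1 : (1:ℝ) ≤ n := by exact_mod_cast hn
  unfold pctr
  rw [← mul_sub, norm_mul, Complex.norm_real, Real.norm_eq_abs, abs_exp_sub_exp]
  have hd : (pAng n k₁ - pAng n k₂)/2 = Real.pi * ((k₁ - k₂ : ℕ) : ℝ) / n := by
    unfold pAng
    rw [Nat.cast_sub hlt.le]
    field_simp
    ring
  have hd1 : 1 ≤ k₁ - k₂ := by omega
  have hdn : k₁ - k₂ < n := by omega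
  have hs := sin_ge hn hd1 hdn
  rw [hd, abs_of_nonneg (le_trans (by positivity) hs)]
  have h1 : (n:ℝ)/2 ≤ |(n:ℝ) - 1/2| := by
    rw [abs_of_nonneg (by linarith)]; linarith
  have h2 : (n:ℝ)/2 * (2 * (2/(n:ℝ))) = 2 := by field_simp
  calc (1:ℝ) ≤ (n:ℝ)/2 * (2 * (2/(n:ℝ))) := by rw [h2]; norm_num
    _ ≤ |(n:ℝ) - 1/2| * (2 * Real.sin (Real.pi * ((k₁ - k₂ : ℕ) : ℝ) / n)) := by
        apply mul_le_mul h1 (by linarith) (by positivity) (abs_nonneg _)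
    _ = _ := rfl

lemma pctr_sep {n₁ k₁ n₂ k₂ : ℕ} (hn₁ : 1 ≤ n₁) (hk₁ : 1 ≤ k₁) (hk₁' : k₁ ≤ n₁)
    (hn₂ : 1 ≤ n₂) (hk₂ : 1 ≤ k₂) (hk₂' : k₂ ≤ n₂) (hne : (n₁, k₁) ≠ (n₂, k₂)) :
    (1:ℝ) ≤ ‖pctr n₁ k₁ - pctr n₂ k₂‖ := by
  by_cases hn : n₁ = n₂
  · subst hn
    have hk : k₁ ≠ k₂ := fun h => hne (by rw [h])
    rcases lt_or_gt_of_ne hk with h | h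
    · rw [norm_sub_rev]
      exact pctr_sep_same hn₁ hk₁ h hk₂'
    · exact pctr_sep_same hn₁ hk₂ h hk₁'
  · have h1 : |‖pctr n₁ k₁‖ - ‖pctr n₂ k₂‖|
        ≤ ‖pctr n₁ k₁ - pctr n₂ k₂‖ := by
      exact abs_norm_sub_norm_le (pctr n₁ k₁) (pctr n₂ k₂)
    rw [abs_pctr _ _ hn₁, abs_pctr _ _ hn₂,
      show ((n₁:ℝ) - 1/2) - ((n₂:ℝ) - 1/2) = (n₁:ℝ) - (n₂:ℝ) by ring] at h1
    refine le_trans ?_ h1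
    rcases lt_or_gt_of_ne hn with h | h
    · have : (n₁:ℝ) + 1 ≤ n₂ := by exact_mod_cast h
      rw [abs_of_nonpos (by linarith)]; linarith
    · have : (n₂:ℝ) + 1 ≤ n₁ := by exact_mod_cast h
      rw [abs_of_nonneg (by linarith)]; linarith

lemma pctr_cover (z : ℂ) (hz : 1 ≤ ‖z‖) :
    ∃ n k : ℕ, 1 ≤ k ∧ k ≤ n ∧ (n:ℝ) - 1 ≤ ‖z‖ ∧ ‖z‖ < n ∧
      ‖z - pctr n k‖ < 4 := by
  have hπ := Real.pi_pos
  set r := ‖z‖ with hr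
  have hr0 : (0:ℝ) ≤ r := by positivity
  set n : ℕ := ⌊r⌋₊ + 1 with hn
  have hn1 : (1:ℕ) ≤ n := by omega
  have hnr : (n:ℝ) - 1 ≤ r := by
    have := Nat.floor_le hr0
    push_cast [hn]
    linarith
  have hrn : r < n := by
    have := Nat.lt_floor_add_one r
    push_cast [hn]
    linarith
  have hn0 : (0:ℝ) < n := by linarith
  -- angle
  set α := Complex.arg z with hα
  set θ : ℝ := if 0 ≤ α then α else α + 2 * Real.pi with hθ
  have hθ0 : 0 ≤ θ := by
    rw [hθ]; split_ifs with h
    · exact h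
    · have := Complex.neg_pi_lt_arg z; rw [← hα] at this; push_neg at h; linarith
  have hθ2 : θ < 2 * Real.pi := by
    rw [hθ]; split_ifs with h
    · have := Complex.arg_le_pi z; rw [← hα] at this; linarith
    · push_neg at h; linarith
  have hzeq : z = (r:ℂ) * Complex.exp ((θ:ℝ) * Complex.I) := by
    rw [hθ]; split_ifs with h
    · exact (Complex.norm_mul_exp_arg_mul_I z).symm
    · rw [show ((α + 2*Real.pi : ℝ):ℂ) * Complex.I
          = (α:ℝ) * Complex.I + 2 * (Real.pi:ℂ) * Complex.I by push_cast; ring,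
        Complex.exp_add, Complex.exp_two_pi_mul_I, mul_one]
      exact (Complex.norm_mul_exp_arg_mul_I z).symm
  set t : ℝ := (n:ℝ) * θ / (2 * Real.pi) with ht
  have ht0 : 0 ≤ t := by positivity
  have htn : t < n := by
    rw [ht, div_lt_iff₀ (by positivity)]
    calc (n:ℝ) * θ < n * (2*Real.pi) := by
          apply mul_lt_mul_of_pos_left hθ2 hn0
      _ = n * (2*Real.pi) := rfl
  set k : ℕ := ⌊t⌋₊ + 1 with hk
  have hk1 : 1 ≤ k := by omega
  have hkn : k ≤ n := by
    have : ⌊t⌋₊ < n := (Nat.floor_lt ht0).2 htn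
    omega
  have hkt1 : (k:ℝ) - 1 ≤ t := by
    have := Nat.floor_le ht0; push_cast [hk]; linarith
  have hkt2 : t < k := by
    have := Nat.lt_floor_add_one t; push_cast [hk]; linarith
  refine ⟨n, k, hk1, hkn, hnr, hrn, ?_⟩
  have hθt : θ = 2 * Real.pi * t / n := by
    rw [ht]; field_simp
  have hang : |θ - pAng n k| ≤ Real.pi / n := by
    rw [hθt]
    unfold pAng
    rw [show 2*Real.pi*t/n - 2*Real.pi*((k:ℝ)-1/2)/n = 2*Real.pi*(t - ((k:ℝ)-1/2))/n by ring]
    rw [abs_div, abs_of_nonneg hn0.le, div_le_div_iff₀ (by linarith) hn0, abs_mul]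
    rw [abs_of_nonneg (by positivity : (0:ℝ) ≤ 2*Real.pi)]
    have h4 : |t - ((k:ℝ)-1/2)| ≤ 1/2 := by
      rw [abs_le]; constructor <;> linarith
    have h5 : 2*Real.pi*|t - ((k:ℝ)-1/2)| ≤ Real.pi := by nlinarith
    nlinarith [mul_le_mul_of_nonneg_right h5 hn0.le]
  -- assemble
  have tri : ‖z - pctr n k‖
      ≤ ‖z - ((((n:ℝ) - 1/2 : ℝ):ℂ)) * Complex.exp ((θ:ℝ) * Complex.I)‖
        + ‖((((n:ℝ) - 1/2 : ℝ):ℂ)) * Complex.exp ((θ:ℝ) * Complex.I) - pctr n k‖ := by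
    exact norm_sub_le_norm_sub_add_norm_sub _ _ _
  have h1 : ‖z - ((((n:ℝ) - 1/2 : ℝ):ℂ)) * Complex.exp ((θ:ℝ) * Complex.I)‖ ≤ 1/2 := by
    rw [hzeq, ← sub_mul, show ((r:ℝ):ℂ) - (((n:ℝ) - 1/2 : ℝ):ℂ) = ((r - ((n:ℝ)-1/2) : ℝ):ℂ) by push_cast; ring,
      norm_mul, Complex.norm_exp_ofReal_mul_I, mul_one, Complex.norm_real, Real.norm_eq_abs, abs_le]
    constructor <;> linarith
  have h2 : ‖((((n:ℝ) - 1/2 : ℝ):ℂ)) * Complex.exp ((θ:ℝ) * Complex.I) - pctr n k‖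
      ≤ Real.pi := by
    unfold pctr
    rw [← mul_sub, norm_mul, Complex.norm_real, Real.norm_eq_abs, abs_exp_sub_exp]
    have hb : |Real.sin ((θ - pAng n k)/2)| ≤ |θ - pAng n k| / 2 := by
      have := abs_sin_le_abs ((θ - pAng n k)/2)
      rwa [abs_div, abs_of_nonneg (by norm_num : (0:ℝ) ≤ 2)] at this
    have hnn : |(n:ℝ) - 1/2| = (n:ℝ) - 1/2 := abs_of_nonneg (by linarith)
    rw [hnn]
    calc ((n:ℝ) - 1/2) * (2 * |Real.sin ((θ - pAng n k)/2)|)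
        ≤ ((n:ℝ) - 1/2) * |θ - pAng n k| := by nlinarith [abs_nonneg (θ - pAng n k)]
      _ ≤ ((n:ℝ) - 1/2) * (Real.pi / n) := by
          apply mul_le_mul_of_nonneg_left hang (by linarith)
      _ ≤ (n:ℝ) * (Real.pi / n) := by
          apply mul_le_mul_of_nonneg_right (by linarith) (by positivity)
      _ = Real.pi := by field_simp
  have hπ4 : Real.pi < 3.15 := Real.pi_lt_d2
  calc ‖z - pctr n k‖ ≤ _ := tri
    _ ≤ 1/2 + Real.pi := add_le_add h1 h2
    _ < 4 := by linarith

lemma summable_iff_tsum_ofReal_ne_top {f : ℕ → ℝ} (hf : ∀ n, 0 ≤ f n) :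
    Summable f ↔ ∑' n, ENNReal.ofReal (f n) ≠ ⊤ := by
  lift f to ℕ → NNReal using hf with f' hf'
  simp only [ENNReal.ofReal_coe_nnreal]
  rw [ENNReal.tsum_coe_ne_top_iff_summable, NNReal.summable_coe]

noncomputable def gfun (ρ : ℂ → ℝ) (γ : ℝ) : ℕ × ℕ → ENNReal :=
  fun p => if 1 ≤ p.2 ∧ p.2 ≤ p.1 then ENNReal.ofReal (ρ (pctr p.1 p.2) ^ (-γ)) else 0

lemma stepA (ρ : ℂ → ℝ) (hρpos : ∀ z, 0 < ρ z) (γ : ℝ) :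
    Summable (fun m : ℕ => ∑ k ∈ Finset.Icc 1 (m + 1), ρ (pctr (m+1) k) ^ (-γ))
      ↔ ∑' p : ℕ × ℕ, gfun ρ γ p ≠ ⊤ := by
  rw [summable_iff_tsum_ofReal_ne_top
    (fun m => Finset.sum_nonneg fun k _ => (Real.rpow_pos_of_pos (hρpos _) _).le)]
  have key : ∑' p : ℕ × ℕ, gfun ρ γ p
      = ∑' m : ℕ, ENNReal.ofReal (∑ k ∈ Finset.Icc 1 (m + 1), ρ (pctr (m+1) k) ^ (-γ)) := by
    rw [ENNReal.tsum_prod (f := fun n k => gfun ρ γ (n, k))]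
    rw [tsum_eq_zero_add' ENNReal.summable]
    have h0 : (∑' k : ℕ, gfun ρ γ (0, k)) = 0 := by
      have h : ∀ k : ℕ, gfun ρ γ (0, k) = 0 := fun k => by
        unfold gfun
        rw [if_neg (by simp; omega)]
      rw [tsum_congr h, tsum_zero]
    rw [h0, zero_add]
    refine tsum_congr fun m => ?_
    rw [ENNReal.ofReal_sum_of_nonneg (fun i _ => (Real.rpow_pos_of_pos (hρpos _) _).le)]
    rw [tsum_eq_sum (s := Finset.Icc 1 (m+1)) (fun k hk => by
      unfold gfun
      rw [if_neg (by rw [Finset.mem_Icc] at hk; simpa using hk)])]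
    refine Finset.sum_congr rfl fun k hk => ?_
    unfold gfun
    rw [if_pos (by exact Finset.mem_Icc.1 hk)]
  rw [key]

lemma rho_measurable (ρ : ℂ → ℝ) (hρpos : ∀ z, 0 < ρ z)
    (hlip : ∀ z ζ : ℂ, |ρ z - ρ ζ| ≤ ‖z - ζ‖) (γ : ℝ) :
    Continuous ρ ∧ Measurable (fun z : ℂ => ENNReal.ofReal (ρ z ^ (-γ))) := by
  have hρc : Continuous ρ := by
    have : LipschitzWith 1 ρ := LipschitzWith.of_dist_le_mul (fun x y => by
      rw [NNReal.coe_one, one_mul, Real.dist_eq, Complex.dist_eq]; exact hlip x y)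
    exact this.continuous
  have hfcont : Continuous (fun z : ℂ => ρ z ^ (-γ)) :=
    hρc.rpow_const (fun x => Or.inl (ne_of_gt (hρpos x)))
  exact ⟨hρc, ENNReal.measurable_ofReal.comp hfcont.measurable⟩

lemma dir1 (ρ : ℂ → ℝ) (hρpos : ∀ z, 0 < ρ z)
    (hlip : ∀ z ζ : ℂ, |ρ z - ρ ζ| ≤ ‖z - ζ‖)
    (γ : ℝ) (hγ : 0 < γ)
    (R : ℝ) (hR1 : 1 ≤ R) (hR : ∀ z : ℂ, R ≤ ‖z‖ → 8 ≤ ρ z)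
    (hI : (∫⁻ z : ℂ, ENNReal.ofReal (ρ z ^ (-γ))) < ⊤) :
    ∑' p : ℕ × ℕ, gfun ρ γ p ≠ ⊤ := by
  classical
  have hπ := Real.pi_pos
  obtain ⟨hρc, hfm⟩ := rho_measurable ρ hρpos hlip γ
  set good : ℕ × ℕ → Prop := fun p => (1 ≤ p.2 ∧ p.2 ≤ p.1) ∧ 8 ≤ ρ (pctr p.1 p.2) with hgood
  set g1 : ℕ × ℕ → ENNReal :=
    fun p => if good p then ENNReal.ofReal (ρ (pctr p.1 p.2) ^ (-γ)) else 0 with hg1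
  set g2 : ℕ × ℕ → ENNReal :=
    fun p => if (1 ≤ p.2 ∧ p.2 ≤ p.1) ∧ ¬ (8 ≤ ρ (pctr p.1 p.2))
      then ENNReal.ofReal (ρ (pctr p.1 p.2) ^ (-γ)) else 0 with hg2
  have hsum : ∀ p, gfun ρ γ p = g1 p + g2 p := by
    intro p
    rw [hg1, hg2]
    dsimp only
    unfold gfun
    by_cases h1 : (1 ≤ p.2 ∧ p.2 ≤ p.1) <;> by_cases h2 : 8 ≤ ρ (pctr p.1 p.2)
    · rw [if_pos h1, if_pos (show good p from ⟨h1, h2⟩), if_neg (by tauto), add_zero]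
    · rw [if_pos h1, if_neg (show ¬ good p from by rw [hgood]; tauto), if_pos ⟨h1, h2⟩, zero_add]
    · rw [if_neg h1, if_neg (show ¬ good p from by rw [hgood]; tauto), if_neg (by tauto), add_zero]
    · rw [if_neg h1, if_neg (show ¬ good p from by rw [hgood]; tauto), if_neg (by tauto), add_zero]
  rw [tsum_congr hsum, ENNReal.tsum_add, ENNReal.add_ne_top]
  constructor
  · -- good part
    set sb : ℕ × ℕ → Set ℂ :=
      fun p => if good p then Metric.ball (pctr p.1 p.2) (1/2) else ∅ with hsb
    have hmeas : ∀ p, MeasurableSet (sb p) := by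
      intro p; rw [hsb]; dsimp only; split_ifs
      exacts [measurableSet_ball, MeasurableSet.empty]
    have hdisj : Pairwise (Function.onFun Disjoint sb) := by
      intro p q hpq
      simp only [Function.onFun, hsb]
      split_ifs with h1 h2
      · refine Metric.ball_disjoint_ball ?_
        rw [Complex.dist_eq]
        have hsep := pctr_sep (le_trans h1.1.1 h1.1.2) h1.1.1 h1.1.2
          (le_trans h2.1.1 h2.1.2) h2.1.1 h2.1.2
          (by simpa using hpq)
        linarith
      all_goals simp
    set Kc : ENNReal := ENNReal.ofReal ((2:ℝ)^(-γ) * (Real.pi/4)) with hKc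
    have hterm : ∀ p, g1 p * Kc ≤ ∫⁻ z in sb p, ENNReal.ofReal (ρ z ^ (-γ)) := by
      intro p
      by_cases hp : good p
      · simp only [hg1, hsb, if_pos hp]
        set c := pctr p.1 p.2 with hc
        have hρc8 : 8 ≤ ρ c := hp.2
        have hpt : ∀ z ∈ Metric.ball c (1/2),
            ENNReal.ofReal ((2:ℝ)^(-γ) * ρ c ^ (-γ)) ≤ ENNReal.ofReal (ρ z ^ (-γ)) := by
          intro z hz
          rw [Metric.mem_ball, Complex.dist_eq] at hz
          have h1 : ρ z ≤ 2 * ρ c := by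
            have := (abs_le.1 (hlip z c)).2
            linarith
          have h2 : (2 * ρ c) ^ (-γ) ≤ ρ z ^ (-γ) :=
            Real.rpow_le_rpow_of_nonpos (hρpos z) h1 (neg_nonpos.2 hγ.le)
          rw [Real.mul_rpow (by norm_num) (hρpos c).le] at h2
          exact ENNReal.ofReal_le_ofReal h2
        calc ENNReal.ofReal (ρ c ^ (-γ)) * Kc
            = ENNReal.ofReal ((2:ℝ)^(-γ) * ρ c ^ (-γ)) * volume (Metric.ball c (1/2)) := by
              rw [Complex.volume_ball, hKc,
                show ((NNReal.pi : ENNReal)) = ENNReal.ofReal Real.pi from by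
                  rw [← NNReal.coe_real_pi, ENNReal.ofReal_coe_nnreal],
                ← ENNReal.ofReal_pow (by norm_num : (0:ℝ) ≤ 1/2),
                ← ENNReal.ofReal_mul (by positivity : (0:ℝ) ≤ (1/2)^2),
                ← ENNReal.ofReal_mul (mul_nonneg (Real.rpow_nonneg (by norm_num) _)
                    (Real.rpow_nonneg (hρpos c).le _)),
                ← ENNReal.ofReal_mul (Real.rpow_nonneg (hρpos c).le _)]
              congr 1
              ring
          _ ≤ ∫⁻ z in Metric.ball c (1/2), ENNReal.ofReal (ρ z ^ (-γ)) := by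
              rw [← setLIntegral_const]
              exact setLIntegral_mono hfm hpt
      · simp [hg1, if_neg hp]
    have hchain : (∑' p, g1 p) * Kc ≤ ∫⁻ z : ℂ, ENNReal.ofReal (ρ z ^ (-γ)) := by
      calc (∑' p, g1 p) * Kc = ∑' p, g1 p * Kc := ENNReal.tsum_mul_right.symm
        _ ≤ ∑' p, ∫⁻ z in sb p, ENNReal.ofReal (ρ z ^ (-γ)) :=
            Summable.tsum_le_tsum hterm ENNReal.summable ENNReal.summable
        _ = ∫⁻ z in ⋃ p, sb p, ENNReal.ofReal (ρ z ^ (-γ)) :=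
            (lintegral_iUnion hmeas hdisj _).symm
        _ ≤ _ := setLIntegral_le_lintegral _ _
    have hKc0 : Kc ≠ 0 := by
      rw [hKc]
      exact (ENNReal.ofReal_pos.2 (by positivity)).ne'
    intro htop
    rw [htop, ENNReal.top_mul hKc0] at hchain
    exact absurd (lt_of_le_of_lt hchain hI) (lt_irrefl ⊤)
  · -- bad part: finitely supported
    set N : ℕ := ⌈R⌉₊ + 2 with hN
    have hsupp : ∀ p : ℕ × ℕ, p ∉ (Finset.range N ×ˢ Finset.range N) → g2 p = 0 := by
      intro p hp
      rw [hg2]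
      dsimp only
      rw [if_neg]
      rintro ⟨⟨hk1, hkn⟩, h8⟩
      have hn1 : 1 ≤ p.1 := le_trans hk1 hkn
      have habs : ‖pctr p.1 p.2‖ = (p.1 : ℝ) - 1/2 := abs_pctr _ _ hn1
      have hlt : ‖pctr p.1 p.2‖ < R := by
        by_contra hge
        exact h8 (hR _ (not_lt.1 hge))
      have hpn : (p.1 : ℝ) < R + 1/2 := by rw [habs] at hlt; linarith
      have hRN : R ≤ (⌈R⌉₊ : ℝ) := Nat.le_ceil R
      have : (p.1 : ℝ) < (N : ℝ) := by
        rw [hN]; push_cast; linarith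
      have hp1 : p.1 < N := by exact_mod_cast this
      have hp2 : p.2 < N := lt_of_le_of_lt (le_trans hkn (le_refl _)) hp1
      exact hp (Finset.mem_product.2 ⟨Finset.mem_range.2 hp1, Finset.mem_range.2 hp2⟩)
    rw [tsum_eq_sum hsupp]
    refine (ENNReal.sum_lt_top.2 fun p _ => ?_).ne
    rw [hg2]
    dsimp only
    split_ifs
    exacts [ENNReal.ofReal_lt_top, ENNReal.zero_lt_top]

lemma dir2 (ρ : ℂ → ℝ) (hρpos : ∀ z, 0 < ρ z)
    (hlip : ∀ z ζ : ℂ, |ρ z - ρ ζ| ≤ ‖z - ζ‖)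
    (γ : ℝ) (hγ : 0 < γ)
    (R : ℝ) (hR1 : 1 ≤ R) (hR : ∀ z : ℂ, R ≤ ‖z‖ → 8 ≤ ρ z)
    (hS : ∑' p : ℕ × ℕ, gfun ρ γ p ≠ ⊤) :
    (∫⁻ z : ℂ, ENNReal.ofReal (ρ z ^ (-γ))) < ⊤ := by
  classical
  have hπ := Real.pi_pos
  obtain ⟨hρc, hfm⟩ := rho_measurable ρ hρpos hlip γ
  rw [← lintegral_add_compl (fun z => ENNReal.ofReal (ρ z ^ (-γ)))
    (measurableSet_closedBall (x := (0:ℂ)) (ε := R + 1))]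
  refine ENNReal.add_lt_top.2 ⟨?_, ?_⟩
  · -- near part
    obtain ⟨z₀, hz₀mem, hz₀min⟩ := (isCompact_closedBall (0:ℂ) (R+1)).exists_isMinOn
      ⟨0, by simp; linarith⟩ hρc.continuousOn
    have hpt : ∀ z ∈ Metric.closedBall (0:ℂ) (R+1),
        ENNReal.ofReal (ρ z ^ (-γ)) ≤ ENNReal.ofReal (ρ z₀ ^ (-γ)) := by
      intro z hz
      exact ENNReal.ofReal_le_ofReal
        (Real.rpow_le_rpow_of_nonpos (hρpos z₀) (hz₀min hz) (neg_nonpos.2 hγ.le))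
    calc ∫⁻ z in Metric.closedBall (0:ℂ) (R+1), ENNReal.ofReal (ρ z ^ (-γ))
        ≤ ∫⁻ _ in Metric.closedBall (0:ℂ) (R+1), ENNReal.ofReal (ρ z₀ ^ (-γ)) :=
          setLIntegral_mono measurable_const hpt
      _ = ENNReal.ofReal (ρ z₀ ^ (-γ)) * volume (Metric.closedBall (0:ℂ) (R+1)) :=
          setLIntegral_const _ _
      _ < ⊤ := by
          rw [Complex.volume_closedBall]
          exact ENNReal.mul_lt_top ENNReal.ofReal_lt_top
            (ENNReal.mul_lt_top (ENNReal.pow_lt_top ENNReal.ofReal_lt_top) ENNReal.coe_lt_top)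
  · -- far part
    set good : ℕ × ℕ → Prop := fun p => (1 ≤ p.2 ∧ p.2 ≤ p.1) ∧ 8 ≤ ρ (pctr p.1 p.2) with hgood
    set sb4 : ℕ × ℕ → Set ℂ :=
      fun p => if good p then Metric.ball (pctr p.1 p.2) 4 else ∅ with hsb4
    have hcov : (Metric.closedBall (0:ℂ) (R+1))ᶜ ⊆ ⋃ p : ℕ × ℕ, sb4 p := by
      intro z hz
      rw [Set.mem_compl_iff, Metric.mem_closedBall, Complex.dist_eq, sub_zero, not_le] at hz
      obtain ⟨n, k, hk1, hkn, hn1, hn2, habs⟩ := pctr_cover z (by linarith)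
      have hn1' : (1:ℕ) ≤ n := by
        by_contra h
        push_neg at h
        interval_cases n
        · simp at hn2; linarith
      have hgoodnk : good (n, k) := by
        refine ⟨⟨hk1, hkn⟩, hR _ ?_⟩
        rw [abs_pctr _ _ hn1']
        linarith
      refine Set.mem_iUnion.2 ⟨(n, k), ?_⟩
      rw [hsb4]
      dsimp only
      rw [if_pos hgoodnk]
      rw [Metric.mem_ball, Complex.dist_eq]
      exact habs
    set K' : ENNReal := ENNReal.ofReal ((2:ℝ)^γ * (16 * Real.pi)) with hK'
    have hterm : ∀ p, (∫⁻ z in sb4 p, ENNReal.ofReal (ρ z ^ (-γ))) ≤ gfun ρ γ p * K' := by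
      intro p
      by_cases hp : good p
      · rw [hsb4]
        dsimp only
        rw [if_pos hp]
        set c := pctr p.1 p.2 with hc
        have h8 : 8 ≤ ρ c := hp.2
        have hpt : ∀ z ∈ Metric.ball c 4,
            ENNReal.ofReal (ρ z ^ (-γ)) ≤ ENNReal.ofReal (ρ c ^ (-γ) * (2:ℝ)^γ) := by
          intro z hz
          rw [Metric.mem_ball, Complex.dist_eq] at hz
          have h1 : ρ c / 2 ≤ ρ z := by
            have := (abs_le.1 (hlip z c)).1
            linarith
          have h2 : ρ z ^ (-γ) ≤ (ρ c / 2) ^ (-γ) :=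
            Real.rpow_le_rpow_of_nonpos (by linarith) h1 (neg_nonpos.2 hγ.le)
          have h3 : (ρ c / 2) ^ (-γ) = ρ c ^ (-γ) * (2:ℝ)^γ := by
            rw [div_eq_mul_inv, Real.mul_rpow (hρpos c).le (by norm_num),
              Real.inv_rpow (by norm_num : (0:ℝ) ≤ 2), Real.rpow_neg (by norm_num : (0:ℝ) ≤ 2),
              inv_inv]
          rw [h3] at h2
          exact ENNReal.ofReal_le_ofReal h2
        calc ∫⁻ z in Metric.ball c 4, ENNReal.ofReal (ρ z ^ (-γ))
            ≤ ∫⁻ _ in Metric.ball c 4, ENNReal.ofReal (ρ c ^ (-γ) * (2:ℝ)^γ) :=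
              setLIntegral_mono measurable_const hpt
          _ = ENNReal.ofReal (ρ c ^ (-γ) * (2:ℝ)^γ) * volume (Metric.ball c 4) :=
              setLIntegral_const _ _
          _ = gfun ρ γ p * K' := by
              unfold gfun
              rw [if_pos hp.1, ← hc, Complex.volume_ball, hK',
                show ((NNReal.pi : ENNReal)) = ENNReal.ofReal Real.pi from by
                  rw [← NNReal.coe_real_pi, ENNReal.ofReal_coe_nnreal],
                ← ENNReal.ofReal_pow (by norm_num : (0:ℝ) ≤ 4),
                ← ENNReal.ofReal_mul (by positivity : (0:ℝ) ≤ (4:ℝ)^2),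
                ← ENNReal.ofReal_mul (mul_nonneg (Real.rpow_nonneg (hρpos c).le _)
                    (Real.rpow_nonneg (by norm_num) _)),
                ← ENNReal.ofReal_mul (Real.rpow_nonneg (hρpos c).le _)]
              congr 1
              ring
      · rw [hsb4]
        dsimp only
        rw [if_neg hp]
        simp
    calc ∫⁻ z in (Metric.closedBall (0:ℂ) (R+1))ᶜ, ENNReal.ofReal (ρ z ^ (-γ))
        ≤ ∫⁻ z in ⋃ p : ℕ × ℕ, sb4 p, ENNReal.ofReal (ρ z ^ (-γ)) := lintegral_mono_set hcov
      _ ≤ ∑' p : ℕ × ℕ, ∫⁻ z in sb4 p, ENNReal.ofReal (ρ z ^ (-γ)) := lintegral_iUnion_le _ _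
      _ ≤ ∑' p : ℕ × ℕ, gfun ρ γ p * K' := Summable.tsum_le_tsum hterm ENNReal.summable ENNReal.summable
      _ = (∑' p : ℕ × ℕ, gfun ρ γ p) * K' := ENNReal.tsum_mul_right
      _ < ⊤ := ENNReal.mul_lt_top (lt_top_iff_ne_top.2 hS) ENNReal.ofReal_lt_top

/-- Sum–integral comparison over the polar grid: for a positive 1-Lipschitz `ρ` tending to
`+∞` at infinity and any `γ > 0`, the double series `Σₙ Σ_{k=1}^n ρ(z_{n,k})^{-γ}` over the
cell centers `z_{n,k} = (n − 1/2) e^{2πi(k−1/2)/n}` converges iff `∫_ℂ ρ(z)^{-γ} dm(z) < ∞`. -/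
theorem sum_integral_comparison
    (ρ : ℂ → ℝ) (hρpos : ∀ z, 0 < ρ z)
    (hlip : ∀ z ζ : ℂ, |ρ z - ρ ζ| ≤ ‖z - ζ‖)
    (htend : Tendsto ρ (cocompact ℂ) atTop)
    (γ : ℝ) (hγ : 0 < γ) :
    Summable (fun m : ℕ => ∑ k ∈ Finset.Icc 1 (m + 1),
        ρ ((((m : ℝ) + 1 - 1 / 2 : ℝ) : ℂ) *
            Complex.exp (((2 * Real.pi : ℝ) : ℂ) * Complex.I *
              (((k : ℂ) - 1 / 2) / ((m : ℂ) + 1)))) ^ (-γ))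
      ↔ (∫⁻ z : ℂ, ENNReal.ofReal (ρ z ^ (-γ))) < ⊤ := by
  classical
  obtain ⟨R, hR1, hR⟩ : ∃ R : ℝ, 1 ≤ R ∧ ∀ z : ℂ, R ≤ ‖z‖ → 8 ≤ ρ z := by
    have h8 : ∀ᶠ z in cocompact ℂ, 8 ≤ ρ z := htend.eventually_ge_atTop 8
    rw [hasBasis_cocompact.eventually_iff] at h8
    obtain ⟨K, hK, hK8⟩ := h8
    obtain ⟨r, hr⟩ := hK.isBounded.subset_closedBall 0
    refine ⟨max r 0 + 1, by linarith [le_max_right r 0], fun z hz => ?_⟩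
    apply hK8
    intro hzK
    have h2 := hr hzK
    rw [Metric.mem_closedBall, Complex.dist_eq, sub_zero] at h2
    linarith [le_max_left r 0]
  have hexpr : ∀ m k : ℕ, ((((m : ℝ) + 1 - 1 / 2 : ℝ) : ℂ) *
      Complex.exp (((2 * Real.pi : ℝ) : ℂ) * Complex.I *
        (((k : ℂ) - 1 / 2) / ((m : ℂ) + 1)))) = pctr (m+1) k := by
    intro m k
    rw [pctr_eq (m+1) k]
    have h1 : (((m : ℝ) + 1 - 1 / 2 : ℝ) : ℂ) = ((((m+1 : ℕ) : ℝ) - 1/2 : ℝ) : ℂ) := by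
      push_cast; ring
    have h2 : ((k : ℂ) - 1 / 2) / ((m : ℂ) + 1) = ((k : ℂ) - 1/2) / (((m+1 : ℕ)) : ℂ) := by
      push_cast; ring
    rw [h1, h2]
  simp only [hexpr]
  rw [stepA ρ hρpos γ]
  constructor
  · exact fun h => dir2 ρ hρpos hlip γ hγ R hR1 hR h
  · exact fun h => dir1 ρ hρpos hlip γ hγ R hR1 hR h
end
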